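/- arXiv:2012.05504 — 2 statements merged into one kernel-verified Lean document; each statement's English description precedes it below -/
import Mathlib

section
/- Suppose K : 𝒯 → ℝ^{n×n} is C¹ on the triangle 𝒯 = {(x,y) : 0 < y < x < 1} (up to the boundary), Σ : [0,1] → ℝ^{n×n} is C¹ diagonal, C ∈ L^∞, and K satisfies ∂_y K(x,y)Σ(y) + Σ(x)∂_x K(x,y) + K(x,y)Σ'(y) − K(x,y)C(y) = 0 on 𝒯 together with C(x) − K(x,x)Σ(x) + Σ(x)K(x,x) = 0 for x ∈ (0,1). Then for any C¹ solution w of ∂_t w = Σ(x)∂_x w + C(x)w on ℝ₊ × (0,1), the function u(t,x) = w(t,x) − ∫₀ˣ K(x,y)w(t,y)dy satisfies ∂_t u(t,x) = Σ(x)∂_x u(t,x) + K(x,0)Σ(0)w(t,0). -/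
open MeasureTheory intervalIntegral Set

lemma aux_hasDerivAt_mulVec {n : ℕ} {A : ℝ → Matrix (Fin n) (Fin n) ℝ}
    {B : Matrix (Fin n) (Fin n) ℝ} {v : ℝ → Fin n → ℝ} {dv : Fin n → ℝ} {s : ℝ}
    (hA : ∀ i j, HasDerivAt (fun r => A r i j) (B i j) s)
    (hv : HasDerivAt v dv s) :
    HasDerivAt (fun r => (A r).mulVec (v r)) (B.mulVec (v s) + (A s).mulVec dv) s := by
  rw [hasDerivAt_pi] at hv ⊢
  intro i
  have : ∀ r, (A r).mulVec (v r) i = ∑ j, A r i j * v r j := by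
    intro r; simp [Matrix.mulVec, dotProduct]
  simp only [this]
  have : (B.mulVec (v s) + (A s).mulVec dv) i
      = ∑ j, (B i j * v s j + A s i j * dv j) := by
    simp [Matrix.mulVec, dotProduct, Finset.sum_add_distrib]
  rw [this]
  exact HasDerivAt.fun_sum fun j _ => (hA i j).mul (hv j)

lemma aux_entry_mul {n : ℕ} {A B : ℝ → Matrix (Fin n) (Fin n) ℝ}
    {A' B' : Matrix (Fin n) (Fin n) ℝ} {s : ℝ}
    (hA : ∀ i j, HasDerivAt (fun r => A r i j) (A' i j) s)
    (hB : ∀ i j, HasDerivAt (fun r => B r i j) (B' i j) s) :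
    ∀ i j, HasDerivAt (fun r => (A r * B r) i j) ((A' * B s + A s * B') i j) s := by
  intro i j
  have h1 : ∀ r, (A r * B r) i j = ∑ k, A r i k * B r k j := by
    intro r; simp [Matrix.mul_apply]
  have h2 : (A' * B s + A s * B') i j = ∑ k, (A' i k * B s k j + A s i k * B' k j) := by
    simp [Matrix.mul_apply, Matrix.add_apply, Finset.sum_add_distrib]
  simp only [h1]; rw [h2]
  exact HasDerivAt.fun_sum fun k _ => (hA i k).mul (hB k j)

lemma aux_continuousOn_mulVec {α : Type*} [TopologicalSpace α] {n : ℕ}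
    {A : α → Matrix (Fin n) (Fin n) ℝ} {v : α → Fin n → ℝ} {S : Set α}
    (hA : ∀ i j, ContinuousOn (fun p => A p i j) S)
    (hv : ∀ i, ContinuousOn (fun p => v p i) S) :
    ContinuousOn (fun p => (A p).mulVec (v p)) S := by
  apply continuousOn_pi.mpr
  intro i
  have : ∀ p, (A p).mulVec (v p) i = ∑ j, A p i j * v p j := by
    intro p; simp [Matrix.mulVec, dotProduct]
  simp only [this]
  exact continuousOn_finset_sum _ fun j _ => (hA i j).mul (hv j)

lemma aux_ext_deriv {n : ℕ} (K Kx : ℝ → ℝ → Matrix (Fin n) (Fin n) ℝ)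
    (hKx : ∀ x ∈ Set.Icc (0:ℝ) 1, ∀ y ∈ Set.Icc (0:ℝ) x, ∀ i j,
      HasDerivAt (fun s => K s y i j) (Kx x y i j) x)
    {y : ℝ} (hy : y ∈ Set.Icc (0:ℝ) 1) {s : ℝ} (hs1 : s ≤ 1) (i j : Fin n) :
    HasDerivAt (fun r => if y ≤ r then K r y i j else K y y i j + (r - y) * Kx y y i j)
      (Kx (max s y) y i j) s := by
  have haff : ∀ z : ℝ, HasDerivAt (fun r => K y y i j + (r - y) * Kx y y i j)
      (Kx y y i j) z := by
    intro z
    simpa using (((hasDerivAt_id z).sub_const y).mul_const (Kx y y i j)).const_add (K y y i j)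
  rcases lt_trichotomy s y with h | h | h
  · have hmax : max s y = y := max_eq_right h.le
    rw [hmax]
    have hev : (fun r => if y ≤ r then K r y i j else K y y i j + (r - y) * Kx y y i j)
        =ᶠ[nhds s] (fun r => K y y i j + (r - y) * Kx y y i j) := by
      filter_upwards [Iio_mem_nhds h] with r hr
      rw [if_neg (not_le.mpr hr)]
    exact hev.hasDerivAt_iff.mpr (haff s)
  · subst h
    have hmax : max s s = s := max_self s
    rw [hmax]
    have h1 : HasDerivWithinAt
        (fun r => if s ≤ r then K r s i j else K s s i j + (r - s) * Kx s s i j)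
        (Kx s s i j) (Set.Ici s) s := by
      refine ((hKx s ⟨hy.1, hs1⟩ s ⟨hy.1, le_rfl⟩ i j).hasDerivWithinAt).congr ?_ ?_
      · intro r hr; rw [if_pos (Set.mem_Ici.mp hr)]
      · rw [if_pos le_rfl]
    have h2 : HasDerivWithinAt
        (fun r => if s ≤ r then K r s i j else K s s i j + (r - s) * Kx s s i j)
        (Kx s s i j) (Set.Iic s) s := by
      refine (haff s).hasDerivWithinAt.congr ?_ ?_
      · intro r hr
        by_cases hc : s ≤ r
        · have : r = s := le_antisymm (Set.mem_Iic.mp hr) hc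
          subst this; rw [if_pos le_rfl]; ring
        · rw [if_neg hc]
      · rw [if_pos le_rfl]; ring
    have := h2.union h1
    rw [Set.Iic_union_Ici] at this
    exact hasDerivWithinAt_univ.mp this
  · have hmax : max s y = s := max_eq_left h.le
    rw [hmax]
    have hev : (fun r => if y ≤ r then K r y i j else K y y i j + (r - y) * Kx y y i j)
        =ᶠ[nhds s] (fun r => K r y i j) := by
      filter_upwards [Ioi_mem_nhds h] with r hr
      rw [if_pos hr.le]
    exact hev.hasDerivAt_iff.mpr
      (hKx s ⟨le_trans hy.1 h.le, hs1⟩ y ⟨hy.1, h.le⟩ i j)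

lemma aux_ext_cont {n : ℕ} (K Kx : ℝ → ℝ → Matrix (Fin n) (Fin n) ℝ)
    (hKcont : ∀ i j, ContinuousOn (fun p : ℝ × ℝ => K p.1 p.2 i j)
      {p : ℝ × ℝ | 0 ≤ p.2 ∧ p.2 ≤ p.1 ∧ p.1 ≤ 1})
    (hKxcont : ∀ i j, ContinuousOn (fun p : ℝ × ℝ => Kx p.1 p.2 i j)
      {p : ℝ × ℝ | 0 ≤ p.2 ∧ p.2 ≤ p.1 ∧ p.1 ≤ 1}) (i j : Fin n) :
    ContinuousOn (fun p : ℝ × ℝ =>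
        if p.2 ≤ p.1 then K p.1 p.2 i j else K p.2 p.2 i j + (p.1 - p.2) * Kx p.2 p.2 i j)
      {p : ℝ × ℝ | 0 ≤ p.2 ∧ p.2 ≤ 1 ∧ p.1 ≤ 1} := by
  set D := {p : ℝ × ℝ | 0 ≤ p.2 ∧ p.2 ≤ 1 ∧ p.1 ≤ 1}
  have hdiagmap : Set.MapsTo (fun p : ℝ × ℝ => (p.2, p.2)) D
      {p : ℝ × ℝ | 0 ≤ p.2 ∧ p.2 ≤ p.1 ∧ p.1 ≤ 1} := by
    intro p hp; exact ⟨hp.1, le_rfl, hp.2.1⟩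
  have hgc : ContinuousOn
      (fun p : ℝ × ℝ => K p.2 p.2 i j + (p.1 - p.2) * Kx p.2 p.2 i j) D := by
    have c1 : ContinuousOn (fun p : ℝ × ℝ => K p.2 p.2 i j) D :=
      (hKcont i j).comp ((continuous_snd.prodMk continuous_snd).continuousOn) hdiagmap
    have c2 : ContinuousOn (fun p : ℝ × ℝ => Kx p.2 p.2 i j) D :=
      (hKxcont i j).comp ((continuous_snd.prodMk continuous_snd).continuousOn) hdiagmap
    exact c1.add (((continuous_fst.sub continuous_snd).continuousOn).mul c2)
  refine ContinuousOn.if ?_ ?_ ?_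
  · intro a ha
    have heq : a.2 = a.1 := by
      have := frontier_le_subset_eq (continuous_snd) (continuous_fst) ha.2
      exact this
    simp only [heq, sub_self, zero_mul, add_zero]
  · have hcl : closure {a : ℝ × ℝ | a.2 ≤ a.1} = {a : ℝ × ℝ | a.2 ≤ a.1} :=
      (isClosed_le continuous_snd continuous_fst).closure_eq
    rw [hcl]
    refine (hKcont i j).mono ?_
    intro p hp; exact ⟨hp.1.1, hp.2, hp.1.2.2⟩
  · exact hgc.mono (Set.inter_subset_left)

noncomputable def extK {n : ℕ} (K Kx : ℝ → ℝ → Matrix (Fin n) (Fin n) ℝ) (s y : ℝ) :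
    Matrix (Fin n) (Fin n) ℝ :=
  Matrix.of fun i j => if y ≤ s then K s y i j else K y y i j + (s - y) * Kx y y i j

lemma extK_eq_of_le {n : ℕ} (K Kx : ℝ → ℝ → Matrix (Fin n) (Fin n) ℝ) {s y : ℝ}
    (h : y ≤ s) : extK K Kx s y = K s y := by
  ext i j; simp [extK, if_pos h]

lemma extK_deriv {n : ℕ} (K Kx : ℝ → ℝ → Matrix (Fin n) (Fin n) ℝ)
    (hKx : ∀ x ∈ Set.Icc (0:ℝ) 1, ∀ y ∈ Set.Icc (0:ℝ) x, ∀ i j,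
      HasDerivAt (fun s => K s y i j) (Kx x y i j) x)
    {y : ℝ} (hy : y ∈ Set.Icc (0:ℝ) 1) {s : ℝ} (hs1 : s ≤ 1) (i j : Fin n) :
    HasDerivAt (fun r => extK K Kx r y i j) (Kx (max s y) y i j) s :=
  aux_ext_deriv K Kx hKx hy hs1 i j

lemma extK_cont {n : ℕ} (K Kx : ℝ → ℝ → Matrix (Fin n) (Fin n) ℝ)
    (hKcont : ∀ i j, ContinuousOn (fun p : ℝ × ℝ => K p.1 p.2 i j)
      {p : ℝ × ℝ | 0 ≤ p.2 ∧ p.2 ≤ p.1 ∧ p.1 ≤ 1})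
    (hKxcont : ∀ i j, ContinuousOn (fun p : ℝ × ℝ => Kx p.1 p.2 i j)
      {p : ℝ × ℝ | 0 ≤ p.2 ∧ p.2 ≤ p.1 ∧ p.1 ≤ 1}) (i j : Fin n) :
    ContinuousOn (fun p : ℝ × ℝ => extK K Kx p.1 p.2 i j)
      {p : ℝ × ℝ | 0 ≤ p.2 ∧ p.2 ≤ 1 ∧ p.1 ≤ 1} :=
  aux_ext_cont K Kx hKcont hKxcont i j


set_option maxHeartbeats 1000000

/-- Backstepping computation: if the kernel `K` satisfies the kernel PDE
`∂_y K(x,y) Σ(y) + Σ(x) ∂_x K(x,y) + K(x,y) Σ'(y) − K(x,y) C(y) = 0` on the triangle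
together with the boundary condition `C(x) − K(x,x)Σ(x) + Σ(x)K(x,x) = 0`, then for any C¹
solution `w` of `∂_t w = Σ ∂_x w + C w`, the transformed function
`u(t,x) = w(t,x) − ∫₀ˣ K(x,y) w(t,y) dy` satisfies
`∂_t u = Σ(x) ∂_x u + K(x,0) Σ(0) w(t,0)`. -/
theorem stmt8 (n : ℕ) (hn : 2 ≤ n)
    (K Kx Ky : ℝ → ℝ → Matrix (Fin n) (Fin n) ℝ)
    (Sg Sgd Cm : ℝ → Matrix (Fin n) (Fin n) ℝ)
    -- Σ is diagonal and C¹ with derivative Sgd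
    (hSgdiag : ∀ x ∈ Set.Icc (0:ℝ) 1, ∀ i j, i ≠ j → Sg x i j = 0)
    (hSgder : ∀ x ∈ Set.Icc (0:ℝ) 1, ∀ i j, HasDerivAt (fun s => Sg s i j) (Sgd x i j) x)
    (hSgcont : ∀ i j, ContinuousOn (fun x => Sgd x i j) (Set.Icc 0 1))
    -- C is continuous
    (hCcont : ∀ i j, ContinuousOn (fun x => Cm x i j) (Set.Icc 0 1))
    -- K is C¹ on the closed triangle, with partial derivatives Kx, Ky
    (hKx : ∀ x ∈ Set.Icc (0:ℝ) 1, ∀ y ∈ Set.Icc (0:ℝ) x, ∀ i j,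
      HasDerivAt (fun s => K s y i j) (Kx x y i j) x)
    (hKy : ∀ x ∈ Set.Icc (0:ℝ) 1, ∀ y ∈ Set.Icc (0:ℝ) x, ∀ i j,
      HasDerivAt (fun s => K x s i j) (Ky x y i j) y)
    (hKcont : ∀ i j, ContinuousOn (fun p : ℝ × ℝ => K p.1 p.2 i j)
      {p : ℝ × ℝ | 0 ≤ p.2 ∧ p.2 ≤ p.1 ∧ p.1 ≤ 1})
    (hKxcont : ∀ i j, ContinuousOn (fun p : ℝ × ℝ => Kx p.1 p.2 i j)
      {p : ℝ × ℝ | 0 ≤ p.2 ∧ p.2 ≤ p.1 ∧ p.1 ≤ 1})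
    (hKycont : ∀ i j, ContinuousOn (fun p : ℝ × ℝ => Ky p.1 p.2 i j)
      {p : ℝ × ℝ | 0 ≤ p.2 ∧ p.2 ≤ p.1 ∧ p.1 ≤ 1})
    -- the kernel equations
    (hker : ∀ x ∈ Set.Ioo (0:ℝ) 1, ∀ y ∈ Set.Ioo (0:ℝ) x,
      Ky x y * Sg y + Sg x * Kx x y + K x y * Sgd y - K x y * Cm y = 0)
    (hbd : ∀ x ∈ Set.Ioo (0:ℝ) 1, Cm x - K x x * Sg x + Sg x * K x x = 0)
    -- w is a C¹ solution of ∂ₜ w = Σ ∂ₓ w + C w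
    (w wt wx : ℝ → ℝ → (Fin n → ℝ))
    (hwt : ∀ t, 0 ≤ t → ∀ x ∈ Set.Icc (0:ℝ) 1, HasDerivAt (fun s => w s x) (wt t x) t)
    (hwx : ∀ t, 0 ≤ t → ∀ x ∈ Set.Icc (0:ℝ) 1, HasDerivAt (fun s => w t s) (wx t x) x)
    (hwcont : ∀ i, ContinuousOn (fun p : ℝ × ℝ => w p.1 p.2 i)
      (Set.Ici 0 ×ˢ Set.Icc 0 1))
    (hwtcont : ∀ i, ContinuousOn (fun p : ℝ × ℝ => wt p.1 p.2 i)
      (Set.Ici 0 ×ˢ Set.Icc 0 1))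
    (hwxcont : ∀ i, ContinuousOn (fun p : ℝ × ℝ => wx p.1 p.2 i)
      (Set.Ici 0 ×ˢ Set.Icc 0 1))
    (hpde : ∀ t, 0 ≤ t → ∀ x ∈ Set.Ioo (0:ℝ) 1,
      wt t x = (Sg x).mulVec (wx t x) + (Cm x).mulVec (w t x))
    -- the backstepping transform
    (u : ℝ → ℝ → (Fin n → ℝ))
    (hu : ∀ t x, u t x = w t x - ∫ y in (0:ℝ)..x, (K x y).mulVec (w t y)) :
    ∀ t, 0 < t → ∀ x ∈ Set.Ioo (0:ℝ) 1,
      ∃ ut ux : Fin n → ℝ,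
        HasDerivAt (fun s => u s x) ut t ∧
        HasDerivAt (fun s => u t s) ux x ∧
        ut = (Sg x).mulVec ux + (K x 0 * Sg 0).mulVec (w t 0) := by

  intro t ht x hx
  obtain ⟨hx0, hx1⟩ := hx
  have htn : (0:ℝ) ≤ t := ht.le
  have hx01 : x ∈ Set.Icc (0:ℝ) 1 := ⟨hx0.le, hx1.le⟩
  have h0x : (0:ℝ) ∈ Set.Icc (0:ℝ) 1 := ⟨le_rfl, zero_le_one⟩
  have hsub01 : Set.Icc (0:ℝ) x ⊆ Set.Icc (0:ℝ) 1 := Set.Icc_subset_Icc le_rfl hx1.le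
  have huIcc : Set.uIcc (0:ℝ) x = Set.Icc 0 x := Set.uIcc_of_le hx0.le
  have huIoc : Set.uIoc (0:ℝ) x = Set.Ioc 0 x := Set.uIoc_of_le hx0.le
  -- slice continuity facts
  have hKsl : ∀ i j, ContinuousOn (fun y => K x y i j) (Set.Icc 0 x) := fun i j =>
    (hKcont i j).comp ((continuous_const.prodMk continuous_id).continuousOn)
      (fun y hy => ⟨hy.1, hy.2, hx1.le⟩)
  have hKysl : ∀ i j, ContinuousOn (fun y => Ky x y i j) (Set.Icc 0 x) := fun i j =>
    (hKycont i j).comp ((continuous_const.prodMk continuous_id).continuousOn)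
      (fun y hy => ⟨hy.1, hy.2, hx1.le⟩)
  have hKxsl : ∀ i j, ContinuousOn (fun y => Kx x y i j) (Set.Icc 0 x) := fun i j =>
    (hKxcont i j).comp ((continuous_const.prodMk continuous_id).continuousOn)
      (fun y hy => ⟨hy.1, hy.2, hx1.le⟩)
  have hSgc : ∀ i j, ContinuousOn (fun y => Sg y i j) (Set.Icc (0:ℝ) 1) := fun i j y hy =>
    ((hSgder y hy i j).continuousAt).continuousWithinAt
  have hwsl : ∀ s, 0 ≤ s → ∀ i, ContinuousOn (fun y => w s y i) (Set.Icc (0:ℝ) 1) :=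
    fun s hs i => (hwcont i).comp ((continuous_const.prodMk continuous_id).continuousOn)
      (fun y hy => ⟨hs, hy⟩)
  have hwtsl : ∀ s, 0 ≤ s → ∀ i, ContinuousOn (fun y => wt s y i) (Set.Icc (0:ℝ) 1) :=
    fun s hs i => (hwtcont i).comp ((continuous_const.prodMk continuous_id).continuousOn)
      (fun y hy => ⟨hs, hy⟩)
  have hwxsl : ∀ s, 0 ≤ s → ∀ i, ContinuousOn (fun y => wx s y i) (Set.Icc (0:ℝ) 1) :=
    fun s hs i => (hwxcont i).comp ((continuous_const.prodMk continuous_id).continuousOn)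
      (fun y hy => ⟨hs, hy⟩)
  have hII : ∀ f : ℝ → (Fin n → ℝ), ContinuousOn f (Set.Icc 0 x) →
      IntervalIntegrable f MeasureTheory.volume 0 x := by
    intro f hf
    apply ContinuousOn.intervalIntegrable
    rw [huIcc]; exact hf
  have hprod : ∀ (A B : ℝ → Matrix (Fin n) (Fin n) ℝ),
      (∀ i j, ContinuousOn (fun y => A y i j) (Set.Icc 0 x)) →
      (∀ i j, ContinuousOn (fun y => B y i j) (Set.Icc 0 x)) →
      ∀ i j, ContinuousOn (fun y => (A y * B y) i j) (Set.Icc 0 x) := by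
    intro A B hA hB i j
    simp only [Matrix.mul_apply]
    exact continuousOn_finset_sum _ fun k _ => (hA i k).mul (hB k j)
  -- integrand continuity on [0,x]
  have cont1 : ContinuousOn (fun y => (K x y).mulVec (wt t y)) (Set.Icc 0 x) :=
    aux_continuousOn_mulVec hKsl (fun i => (hwtsl t htn i).mono hsub01)
  have cont2 : ContinuousOn (fun y => (Kx x y).mulVec (w t y)) (Set.Icc 0 x) :=
    aux_continuousOn_mulVec hKxsl (fun i => (hwsl t htn i).mono hsub01)
  have cont3 : ContinuousOn (fun y => (K x y * Sg y).mulVec (wx t y)) (Set.Icc 0 x) :=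
    aux_continuousOn_mulVec (hprod _ _ hKsl (fun i j => (hSgc i j).mono hsub01))
      (fun i => (hwxsl t htn i).mono hsub01)
  have cont4 : ContinuousOn (fun y => (K x y * Cm y).mulVec (w t y)) (Set.Icc 0 x) :=
    aux_continuousOn_mulVec (hprod _ _ hKsl (fun i j => (hCcont i j).mono hsub01))
      (fun i => (hwsl t htn i).mono hsub01)
  have cont5 : ContinuousOn
      (fun y => (Ky x y * Sg y + K x y * Sgd y).mulVec (w t y)) (Set.Icc 0 x) := by
    apply aux_continuousOn_mulVec
    · intro i j
      simp only [Matrix.add_apply]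
      exact (hprod _ _ hKysl (fun i j => (hSgc i j).mono hsub01) i j).add
        (hprod _ _ hKsl (fun i j => (hSgcont i j).mono hsub01) i j)
    · exact fun i => (hwsl t htn i).mono hsub01
  -- ===== time derivative =====
  have hball1 : Metric.closedBall t (t/2) ×ˢ Set.Icc (0:ℝ) x ⊆
      Set.Ici (0:ℝ) ×ˢ Set.Icc (0:ℝ) 1 := by
    rintro ⟨s, y⟩ ⟨hs, hy⟩
    rw [Metric.mem_closedBall, Real.dist_eq] at hs
    have h := abs_le.mp hs
    exact ⟨by simp only [Set.mem_Ici]; linarith [h.1], hsub01 hy⟩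
  have hjc1 : ContinuousOn (fun p : ℝ × ℝ => (K x p.2).mulVec (wt p.1 p.2))
      (Metric.closedBall t (t/2) ×ˢ Set.Icc (0:ℝ) x) := by
    apply aux_continuousOn_mulVec
    · intro i j
      exact (hKcont i j).comp ((continuous_const.prodMk continuous_snd).continuousOn)
        (by rintro ⟨s, y⟩ ⟨hs, hy⟩; exact ⟨hy.1, hy.2, hx1.le⟩)
    · intro i
      exact (hwtcont i).mono hball1
  obtain ⟨C1, hC1⟩ :=
    ((isCompact_closedBall t (t/2)).prod isCompact_Icc).exists_bound_of_continuousOn hjc1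
  have hUt : HasDerivAt (fun s => ∫ y in (0:ℝ)..x, (K x y).mulVec (w s y))
      (∫ y in (0:ℝ)..x, (K x y).mulVec (wt t y)) t := by
    refine (intervalIntegral.hasDerivAt_integral_of_dominated_loc_of_deriv_le
      (F := fun s y => (K x y).mulVec (w s y)) (F' := fun s y => (K x y).mulVec (wt s y))
      (bound := fun _ => C1) (Metric.ball_mem_nhds t (half_pos ht)) ?_ ?_ ?_ ?_ ?_ ?_).2
    · filter_upwards [Ioi_mem_nhds ht] with s hs
      refine ((aux_continuousOn_mulVec hKsl
        (fun i => (hwsl s (le_of_lt hs) i).mono hsub01)).mono ?_).aestronglyMeasurable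
        measurableSet_uIoc
      rw [huIoc]; exact Set.Ioc_subset_Icc_self
    · exact hII _ (aux_continuousOn_mulVec hKsl (fun i => (hwsl t htn i).mono hsub01))
    · refine ((cont1).mono ?_).aestronglyMeasurable measurableSet_uIoc
      rw [huIoc]; exact Set.Ioc_subset_Icc_self
    · refine MeasureTheory.ae_of_all _ ?_
      intro y hy s hs
      rw [huIoc] at hy
      exact hC1 (s, y) ⟨Metric.ball_subset_closedBall hs, ⟨hy.1.le, hy.2⟩⟩
    · exact intervalIntegrable_const
    · refine MeasureTheory.ae_of_all _ ?_
      intro y hy s hs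
      rw [Metric.mem_ball, Real.dist_eq] at hs
      have hs0 : (0:ℝ) < s := by have := abs_lt.mp hs; linarith
      rw [huIoc] at hy
      have hdv := hwt s hs0.le y (hsub01 ⟨hy.1.le, hy.2⟩)
      have hd := aux_hasDerivAt_mulVec (A := fun _ => K x y) (B := 0)
        (fun i j => by simpa using hasDerivAt_const s (K x y i j)) hdv
      simpa [Matrix.zero_mulVec] using hd
  have hut : HasDerivAt (fun s => u s x)
      (wt t x - ∫ y in (0:ℝ)..x, (K x y).mulVec (wt t y)) t := by
    simp only [hu]
    exact (hwt t htn x hx01).sub hUt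
  -- ===== space derivative =====
  have hε : (0:ℝ) < min x (1 - x) := lt_min hx0 (by linarith)
  have hball2 : ∀ s ∈ Metric.ball x (min x (1-x)), s ∈ Set.Ioo (0:ℝ) 1 := by
    intro s hs
    rw [Metric.mem_ball, Real.dist_eq] at hs
    have h1 := abs_lt.mp hs
    constructor
    · linarith [min_le_left x (1-x)]
    · linarith [min_le_right x (1-x)]
  have hFc : ContinuousOn (fun p : ℝ × ℝ => (extK K Kx p.1 p.2).mulVec (w t p.2))
      {p : ℝ × ℝ | 0 ≤ p.2 ∧ p.2 ≤ 1 ∧ p.1 ≤ 1} := by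
    apply aux_continuousOn_mulVec
    · intro i j; exact extK_cont K Kx hKcont hKxcont i j
    · intro i
      exact (hwcont i).comp ((continuous_const.prodMk continuous_snd).continuousOn)
        (fun p hp => ⟨htn, hp.1, hp.2.1⟩)
  have hFsl : ∀ s ∈ Set.Icc (0:ℝ) 1,
      ContinuousOn (fun y => (extK K Kx s y).mulVec (w t y)) (Set.Icc (0:ℝ) 1) :=
    fun s hs => hFc.comp ((continuous_const.prodMk continuous_id).continuousOn)
      (fun y hy => ⟨hy.1, hy.2, hs.2⟩)
  have hFint : ∀ s ∈ Set.Icc (0:ℝ) 1, ∀ a ∈ Set.Icc (0:ℝ) 1, ∀ b ∈ Set.Icc (0:ℝ) 1,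
      IntervalIntegrable (fun y => (extK K Kx s y).mulVec (w t y))
        MeasureTheory.volume a b := by
    intro s hs a ha b hb
    exact ((hFsl s hs).mono (Set.uIcc_subset_Icc ha hb)).intervalIntegrable
  have hF'c : ContinuousOn (fun p : ℝ × ℝ => (Kx (max p.1 p.2) p.2).mulVec (w t p.2))
      {p : ℝ × ℝ | 0 ≤ p.2 ∧ p.2 ≤ 1 ∧ p.1 ≤ 1} := by
    apply aux_continuousOn_mulVec
    · intro i j
      exact (hKxcont i j).comp
        (((continuous_fst.max continuous_snd).prodMk continuous_snd).continuousOn)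
        (fun p hp => ⟨hp.1, le_max_right _ _, max_le hp.2.2 hp.2.1⟩)
    · intro i
      exact (hwcont i).comp ((continuous_const.prodMk continuous_snd).continuousOn)
        (fun p hp => ⟨htn, hp.1, hp.2.1⟩)
  obtain ⟨C2, hC2⟩ := (isCompact_Icc.prod isCompact_Icc).exists_bound_of_continuousOn
    (hF'c.mono (fun p hp => ⟨hp.2.1, hp.2.2, hp.1.2⟩) :
      ContinuousOn _ (Set.Icc (0:ℝ) 1 ×ˢ Set.Icc (0:ℝ) 1))
  have hG1 : HasDerivAt (fun s => ∫ y in (0:ℝ)..x, (extK K Kx s y).mulVec (w t y))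
      (∫ y in (0:ℝ)..x, (Kx (max x y) y).mulVec (w t y)) x := by
    refine (intervalIntegral.hasDerivAt_integral_of_dominated_loc_of_deriv_le
      (F := fun s y => (extK K Kx s y).mulVec (w t y))
      (F' := fun s y => (Kx (max s y) y).mulVec (w t y))
      (bound := fun _ => C2) (Metric.ball_mem_nhds x hε) ?_ ?_ ?_ ?_ ?_ ?_).2
    · filter_upwards [Metric.ball_mem_nhds x hε] with s hs
      have hs01 := hball2 s hs
      refine ((hFsl s ⟨hs01.1.le, hs01.2.le⟩).mono ?_).aestronglyMeasurable measurableSet_uIoc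
      rw [huIoc]; exact fun y hy => ⟨hy.1.le, le_trans hy.2 hx1.le⟩
    · exact hFint x hx01 0 h0x x hx01
    · have hsl : ContinuousOn (fun y => (Kx (max x y) y).mulVec (w t y)) (Set.Icc (0:ℝ) 1) :=
        hF'c.comp ((continuous_const.prodMk continuous_id).continuousOn)
          (fun y hy => ⟨hy.1, hy.2, hx1.le⟩)
      refine (hsl.mono ?_).aestronglyMeasurable measurableSet_uIoc
      rw [huIoc]; exact fun y hy => ⟨hy.1.le, le_trans hy.2 hx1.le⟩
    · refine MeasureTheory.ae_of_all _ ?_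
      intro y hy s hs
      rw [huIoc] at hy
      have hs01 := hball2 s hs
      exact hC2 (s, y) ⟨⟨hs01.1.le, hs01.2.le⟩, ⟨hy.1.le, le_trans hy.2 hx1.le⟩⟩
    · exact intervalIntegrable_const
    · refine MeasureTheory.ae_of_all _ ?_
      intro y hy s hs
      rw [huIoc] at hy
      have hy01 : y ∈ Set.Icc (0:ℝ) 1 := ⟨hy.1.le, le_trans hy.2 hx1.le⟩
      have hs1 : s ≤ 1 := (hball2 s hs).2.le
      have hd := aux_hasDerivAt_mulVec (A := fun r => extK K Kx r y) (B := Kx (max s y) y)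
        (fun i j => extK_deriv K Kx hKx hy01 hs1 i j) (hasDerivAt_const s (w t y))
      simpa [Matrix.mulVec_zero] using hd
  have hIeq : (∫ y in (0:ℝ)..x, (Kx (max x y) y).mulVec (w t y))
      = ∫ y in (0:ℝ)..x, (Kx x y).mulVec (w t y) := by
    apply intervalIntegral.integral_congr
    intro y hy
    rw [huIcc] at hy
    show (Kx (max x y) y).mulVec (w t y) = (Kx x y).mulVec (w t y)
    rw [max_eq_left hy.2]
  rw [hIeq] at hG1
  have hG2 : HasDerivAt (fun s => ∫ y in x..s, (extK K Kx s y).mulVec (w t y))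
      ((K x x).mulVec (w t x)) x := by
    rw [hasDerivAt_iff_isLittleO]
    have hzero : (∫ y in x..x, (extK K Kx x y).mulVec (w t y)) = (0 : Fin n → ℝ) :=
      intervalIntegral.integral_same
    rw [hzero]
    rw [Asymptotics.isLittleO_iff]
    intro c hc
    have hcw := hFc (x, x) ⟨hx0.le, hx1.le, hx1.le⟩
    rw [Metric.continuousWithinAt_iff] at hcw
    obtain ⟨δ, hδ0, hδ⟩ := hcw c hc
    filter_upwards [Metric.ball_mem_nhds x (lt_min hδ0 hε)] with s hs
    have hsδ : dist s x < δ := lt_of_lt_of_le (Metric.mem_ball.mp hs) (min_le_left _ _)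
    have hsε : s ∈ Metric.ball x (min x (1-x)) :=
      Metric.mem_ball.mpr (lt_of_lt_of_le (Metric.mem_ball.mp hs) (min_le_right _ _))
    have hs01 : s ∈ Set.Icc (0:ℝ) 1 := ⟨(hball2 s hsε).1.le, (hball2 s hsε).2.le⟩
    have hkey : ∀ y ∈ Set.uIoc x s,
        ‖(extK K Kx s y).mulVec (w t y) - (K x x).mulVec (w t x)‖ ≤ c := by
      intro y hy
      have hyfacts : |y - x| ≤ |s - x| ∧ y ∈ Set.Icc (0:ℝ) 1 := by
        rcases le_total x s with hxs | hxs
        · rw [Set.uIoc_of_le hxs] at hy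
          constructor
          · rw [abs_of_nonneg (by linarith [hy.1.le] : (0:ℝ) ≤ y - x),
              abs_of_nonneg (by linarith : (0:ℝ) ≤ s - x)]
            linarith [hy.2]
          · exact ⟨le_trans hx0.le hy.1.le, le_trans hy.2 hs01.2⟩
        · rw [Set.uIoc_of_ge hxs] at hy
          constructor
          · rw [abs_of_nonpos (by linarith [hy.2] : y - x ≤ 0),
              abs_of_nonpos (by linarith : s - x ≤ 0)]
            linarith [hy.1]
          · exact ⟨le_trans hs01.1 hy.1.le, le_trans hy.2 hx1.le⟩
      have hmem : ((s, y) : ℝ × ℝ) ∈ {p : ℝ × ℝ | 0 ≤ p.2 ∧ p.2 ≤ 1 ∧ p.1 ≤ 1} :=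
        ⟨hyfacts.2.1, hyfacts.2.2, hs01.2⟩
      have hdist : dist ((s, y) : ℝ × ℝ) (x, x) < δ := by
        rw [Prod.dist_eq]
        apply max_lt hsδ
        rw [Real.dist_eq]
        exact lt_of_le_of_lt (by rw [Real.dist_eq] at hsδ ⊢; exact hyfacts.1) hsδ
      have := hδ hmem hdist
      rw [extK_eq_of_le K Kx le_rfl, dist_eq_norm] at this
      exact this.le
    have hInt : IntervalIntegrable (fun y => (extK K Kx s y).mulVec (w t y))
        MeasureTheory.volume x s := hFint s hs01 x hx01 s hs01
    have heq : (∫ y in x..s, (extK K Kx s y).mulVec (w t y))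
          - (s - x) • (K x x).mulVec (w t x)
        = ∫ y in x..s, ((extK K Kx s y).mulVec (w t y) - (K x x).mulVec (w t x)) := by
      rw [intervalIntegral.integral_sub hInt intervalIntegrable_const,
        intervalIntegral.integral_const]
    rw [sub_zero, heq]
    calc ‖∫ y in x..s, ((extK K Kx s y).mulVec (w t y) - (K x x).mulVec (w t x))‖
        ≤ c * |s - x| := intervalIntegral.norm_integral_le_of_norm_le_const hkey
      _ = c * ‖s - x‖ := by rw [Real.norm_eq_abs]
  have hux : HasDerivAt (fun s => u t s)
      (wx t x - ((∫ y in (0:ℝ)..x, (Kx x y).mulVec (w t y)) + (K x x).mulVec (w t x))) x := by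
    have hEv : (fun s => u t s) =ᶠ[nhds x] (fun s => w t s -
        ((∫ y in (0:ℝ)..x, (extK K Kx s y).mulVec (w t y))
          + ∫ y in x..s, (extK K Kx s y).mulVec (w t y))) := by
      filter_upwards [Metric.ball_mem_nhds x hε] with s hs
      have hs01 : s ∈ Set.Icc (0:ℝ) 1 := ⟨(hball2 s hs).1.le, (hball2 s hs).2.le⟩
      rw [hu]
      congr 1
      rw [intervalIntegral.integral_add_adjacent_intervals
        (hFint s hs01 0 h0x x hx01) (hFint s hs01 x hx01 s hs01)]
      apply intervalIntegral.integral_congr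
      intro y hy
      have hyle : y ≤ s := by
        rw [Set.uIcc_of_le hs01.1] at hy; exact hy.2
      show (K s y).mulVec (w t y) = (extK K Kx s y).mulVec (w t y)
      rw [extK_eq_of_le K Kx hyle]
    rw [Filter.EventuallyEq.hasDerivAt_iff hEv]
    exact (hwx t htn x hx01).sub (hG1.add hG2)
  -- ===== the algebraic identity =====
  refine ⟨_, _, hut, hux, ?_⟩
  have hne : ∀ᵐ (y : ℝ), y ≠ x := by
    have : MeasureTheory.volume ({x} : Set ℝ) = 0 := Real.volume_singleton
    have h2 := MeasureTheory.measure_eq_zero_iff_ae_notMem.mp this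
    filter_upwards [h2] with y hy
    simpa using hy
  -- step 1: use the PDE inside the integral
  have hE1 : (∫ y in (0:ℝ)..x, (K x y).mulVec (wt t y))
      = (∫ y in (0:ℝ)..x, (K x y * Sg y).mulVec (wx t y))
        + ∫ y in (0:ℝ)..x, (K x y * Cm y).mulVec (w t y) := by
    have h : (∫ y in (0:ℝ)..x, (K x y).mulVec (wt t y))
        = ∫ y in (0:ℝ)..x,
            ((K x y * Sg y).mulVec (wx t y) + (K x y * Cm y).mulVec (w t y)) := by
      apply intervalIntegral.integral_congr_ae
      refine MeasureTheory.ae_of_all _ ?_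
      intro y hy
      rw [huIoc] at hy
      have hy01 : y ∈ Set.Ioo (0:ℝ) 1 := ⟨hy.1, lt_of_le_of_lt hy.2 hx1⟩
      rw [hpde t htn y hy01, Matrix.mulVec_add, Matrix.mulVec_mulVec, Matrix.mulVec_mulVec]
    rw [h, intervalIntegral.integral_add (hII _ cont3) (hII _ cont4)]
  -- step 2: integration by parts
  have hIBP : (∫ y in (0:ℝ)..x,
        ((Ky x y * Sg y + K x y * Sgd y).mulVec (w t y) + (K x y * Sg y).mulVec (wx t y)))
      = (K x x * Sg x).mulVec (w t x) - (K x 0 * Sg 0).mulVec (w t 0) := by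
    refine intervalIntegral.integral_eq_sub_of_hasDerivAt
      (f := fun y => (K x y * Sg y).mulVec (w t y)) ?_ ?_
    · intro y hy
      rw [huIcc] at hy
      have hy01 : y ∈ Set.Icc (0:ℝ) 1 := hsub01 hy
      have hA := aux_entry_mul (A := fun r => K x r) (B := fun r => Sg r)
        (A' := Ky x y) (B' := Sgd y) (fun i j => hKy x hx01 y hy i j)
        (fun i j => hSgder y hy01 i j)
      exact aux_hasDerivAt_mulVec hA (hwx t htn y hy01)
    · exact hII _ (cont5.add cont3)
  have hsum : (∫ y in (0:ℝ)..x, (Ky x y * Sg y + K x y * Sgd y).mulVec (w t y))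
      + (∫ y in (0:ℝ)..x, (K x y * Sg y).mulVec (wx t y))
      = (K x x * Sg x).mulVec (w t x) - (K x 0 * Sg 0).mulVec (w t 0) := by
    rw [← intervalIntegral.integral_add (hII _ cont5) (hII _ cont3)]
    exact hIBP
  -- step 3: kernel PDE inside the integral
  have hker' : (∫ y in (0:ℝ)..x,
        ((Ky x y * Sg y + K x y * Sgd y).mulVec (w t y) - (K x y * Cm y).mulVec (w t y)))
      = - (Sg x).mulVec (∫ y in (0:ℝ)..x, (Kx x y).mulVec (w t y)) := by
    have hae : ∀ᵐ y ∂(MeasureTheory.volume), y ∈ Set.uIoc (0:ℝ) x →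
        ((Ky x y * Sg y + K x y * Sgd y).mulVec (w t y) - (K x y * Cm y).mulVec (w t y))
          = - (Sg x).mulVec ((Kx x y).mulVec (w t y)) := by
      filter_upwards [hne] with y hyne hy
      rw [huIoc] at hy
      have hylt : y < x := lt_of_le_of_ne hy.2 hyne
      have h0 := hker x ⟨hx0, hx1⟩ y ⟨hy.1, hylt⟩
      have hmat : Ky x y * Sg y + K x y * Sgd y - K x y * Cm y = -(Sg x * Kx x y) := by
        rw [eq_neg_iff_add_eq_zero, ← h0]; abel
      rw [← Matrix.sub_mulVec, hmat, Matrix.neg_mulVec, Matrix.mulVec_mulVec]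
    rw [intervalIntegral.integral_congr_ae hae, intervalIntegral.integral_neg]
    congr 1
    have hL := ContinuousLinearMap.intervalIntegral_comp_comm
      (LinearMap.toContinuousLinearMap ((Sg x).mulVecLin)) (hII _ cont2)
    simpa [Matrix.mulVecLin_apply] using hL
  have hdiff : (∫ y in (0:ℝ)..x, (Ky x y * Sg y + K x y * Sgd y).mulVec (w t y))
      - (∫ y in (0:ℝ)..x, (K x y * Cm y).mulVec (w t y))
      = - (Sg x).mulVec (∫ y in (0:ℝ)..x, (Kx x y).mulVec (w t y)) := by
    rw [← intervalIntegral.integral_sub (hII _ cont5) (hII _ cont4)]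
    exact hker'
  have hI1 : (∫ y in (0:ℝ)..x, (K x y).mulVec (wt t y))
      = (K x x * Sg x).mulVec (w t x) - (K x 0 * Sg 0).mulVec (w t 0)
        + (Sg x).mulVec (∫ y in (0:ℝ)..x, (Kx x y).mulVec (w t y)) := by
    rw [hE1]
    linear_combination hsum - hdiff
  -- conclude
  rw [hpde t htn x ⟨hx0, hx1⟩, hI1]
  have hCm : Cm x = K x x * Sg x - Sg x * K x x := by
    have hb := hbd x ⟨hx0, hx1⟩
    rw [← sub_eq_zero, ← hb]; abel
  rw [hCm]
  simp only [Matrix.sub_mulVec, Matrix.mulVec_sub, Matrix.mulVec_add,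
    ← Matrix.mulVec_mulVec]
  abel
end

section
/- The Volterra transform of the second kind u(x) = w(x) − ∫₀ˣ K(x,y)w(y)dy, with kernel K ∈ L^∞(𝒯; ℝ^{n×n}) on the triangle 𝒯 = {0 < y < x < 1}, defines a bounded linear operator I − T_K on [L²(0,1)]ⁿ which is invertible, with inverse of the same form I − T_L for some L ∈ L^∞(𝒯; ℝ^{n×n}). -/
open MeasureTheory intervalIntegral

section Volterra

variable (n : ℕ)

/-- Bundled "good kernel": measurable, globally bounded, supported in the triangle. -/
structure GoodKer where
  G : ℝ → ℝ → Matrix (Fin n) (Fin n) ℝ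
  C : ℝ
  C0 : 0 ≤ C
  meas : ∀ i j, Measurable (fun p : ℝ × ℝ => G p.1 p.2 i j)
  bd : ∀ x y i j, |G x y i j| ≤ C
  supp : ∀ x y, ¬ (0 ≤ y ∧ y ≤ x ∧ x ≤ 1) → G x y = 0

variable {n}

/-- Application of a kernel to a function, componentwise. -/
noncomputable def appv (A : ℝ → ℝ → Matrix (Fin n) (Fin n) ℝ) (w : ℝ → Fin n → ℝ)
    (x : ℝ) : Fin n → ℝ :=
  fun i => ∫ y in Set.Ioc 0 x, ∑ j, A x y i j * w y j

/-- Niceness of a function: measurable and integrable on `(0,1]`. -/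
def Nice (w : ℝ → Fin n → ℝ) : Prop :=
  Measurable w ∧ IntegrableOn w (Set.Ioc 0 1) volume

lemma nice_comp_meas (w : ℝ → Fin n → ℝ) (hw : Nice w) (i : Fin n) :
    Measurable fun y => w y i := (measurable_pi_apply i).comp hw.1









lemma scal_bd (G : GoodKer n) (w : ℝ → Fin n → ℝ) (x y : ℝ) (i : Fin n) :
    |∑ j, G.G x y i j * w y j| ≤ (n * G.C) * ‖w y‖ := by
  calc |∑ j, G.G x y i j * w y j| ≤ ∑ j, |G.G x y i j * w y j| :=
        Finset.abs_sum_le_sum_abs _ _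
    _ ≤ ∑ _j : Fin n, G.C * ‖w y‖ := by
        refine Finset.sum_le_sum fun j _ => ?_
        rw [abs_mul]
        exact mul_le_mul (G.bd _ _ _ _) (by simpa [Real.norm_eq_abs] using norm_le_pi_norm (w y) j)
          (abs_nonneg _) G.C0
    _ = (n * G.C) * ‖w y‖ := by
        simp [Finset.sum_const, Finset.card_univ]; ring

lemma meas_scal (G : GoodKer n) (w : ℝ → Fin n → ℝ) (hw : Nice w) (x : ℝ) (i : Fin n) :
    Measurable (fun y => ∑ j, G.G x y i j * w y j) := by
  refine Finset.measurable_sum _ fun j _ => ?_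
  exact ((G.meas i j).comp (measurable_const.prodMk measurable_id)).mul
    ((measurable_pi_apply j).comp hw.1)

lemma intg_scal (G : GoodKer n) (w : ℝ → Fin n → ℝ) (hw : Nice w) (x : ℝ) (i : Fin n) :
    Integrable (fun y => ∑ j, G.G x y i j * w y j) (volume.restrict (Set.Ioc 0 x)) := by
  by_cases hx : x ≤ 1
  · refine Integrable.mono' (g := fun y => (n * G.C) * ‖w y‖)
      (IntegrableOn.mono_set (hw.2.norm.const_mul _) (Set.Ioc_subset_Ioc_right hx))
      (meas_scal G w hw x i).aestronglyMeasurable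
      (Filter.Eventually.of_forall fun y => ?_)
    simpa [Real.norm_eq_abs] using scal_bd G w x y i
  · have h0 : (fun y => ∑ j, G.G x y i j * w y j) = fun _ => (0:ℝ) := by
      funext y
      have := G.supp x y (fun h => hx h.2.2)
      simp [this]
    rw [h0]
    exact integrable_zero _ _ _

lemma mulVec_apply_eq (G : GoodKer n) (w : ℝ → Fin n → ℝ) (x y : ℝ) (i : Fin n) :
    (G.G x y).mulVec (w y) i = ∑ j, G.G x y i j * w y j := by
  simp [Matrix.mulVec, dotProduct]

lemma intg_vec (G : GoodKer n) (w : ℝ → Fin n → ℝ) (hw : Nice w) (x : ℝ) :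
    Integrable (fun y => (G.G x y).mulVec (w y)) (volume.restrict (Set.Ioc 0 x)) := by
  by_cases hx : x ≤ 1
  · refine Integrable.mono' (g := fun y => (n * G.C) * ‖w y‖)
      (IntegrableOn.mono_set (hw.2.norm.const_mul _) (Set.Ioc_subset_Ioc_right hx))
      (Measurable.aestronglyMeasurable (measurable_pi_lambda _ fun i => by
        simpa only [mulVec_apply_eq] using meas_scal G w hw x i))
      (Filter.Eventually.of_forall fun y => ?_)
    rw [pi_norm_le_iff_of_nonneg (by have := G.C0; positivity)]
    intro i
    rw [mulVec_apply_eq, Real.norm_eq_abs]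
    exact scal_bd G w x y i
  · have h0 : (fun y => (G.G x y).mulVec (w y)) = fun _ => (0 : Fin n → ℝ) := by
      funext y
      have := G.supp x y (fun h => hx h.2.2)
      simp [this]
    rw [h0]
    exact integrable_zero _ _ _

lemma meas_appv_i (G : GoodKer n) (w : ℝ → Fin n → ℝ) (hw : Nice w) (i : Fin n) :
    Measurable (fun x => appv G.G w x i) := by
  set F : ℝ × ℝ → ℝ := fun p =>
    if 0 < p.2 ∧ p.2 ≤ p.1 then ∑ j, G.G p.1 p.2 i j * w p.2 j else 0 with hFdef
  have hF : StronglyMeasurable F := by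
    rw [stronglyMeasurable_iff_measurable]
    refine Measurable.ite ?_ ?_ measurable_const
    · exact MeasurableSet.inter
        (measurableSet_lt measurable_const measurable_snd)
        (measurableSet_le measurable_snd measurable_fst)
    · refine Finset.measurable_sum _ fun j _ => ?_
      exact (G.meas i j).mul ((measurable_pi_apply j).comp (hw.1.comp measurable_snd))
  have h2 := hF.integral_prod_right' (ν := volume)
  rw [stronglyMeasurable_iff_measurable] at h2
  have heq : (fun x => appv G.G w x i) = fun x => ∫ y, F (x, y) := by
    funext x
    rw [appv, ← MeasureTheory.integral_indicator measurableSet_Ioc]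
    congr 1
    funext y
    simp [hFdef, Set.indicator_apply, Set.mem_Ioc]
  rw [heq]
  exact h2

lemma meas_appv (G : GoodKer n) (w : ℝ → Fin n → ℝ) (hw : Nice w) :
    Measurable (appv G.G w) :=
  measurable_pi_lambda _ fun i => meas_appv_i G w hw i

lemma abs_appv_le (G : GoodKer n) (w : ℝ → Fin n → ℝ) (hw : Nice w) (x : ℝ) (i : Fin n) :
    |appv G.G w x i| ≤ (n * G.C) * ∫ y in Set.Ioc (0:ℝ) 1, ‖w y‖ := by
  have hR : 0 ≤ (n * G.C) * ∫ y in Set.Ioc (0:ℝ) 1, ‖w y‖ := by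
    have : 0 ≤ ∫ y in Set.Ioc (0:ℝ) 1, ‖w y‖ := integral_nonneg fun y => norm_nonneg _
    have := G.C0; positivity
  by_cases hx : x ≤ 1
  · rw [← Real.norm_eq_abs]
    calc ‖appv G.G w x i‖ ≤ ∫ y in Set.Ioc 0 x, (n * G.C) * ‖w y‖ := by
          refine norm_integral_le_of_norm_le
            (IntegrableOn.mono_set (hw.2.norm.const_mul _) (Set.Ioc_subset_Ioc_right hx))
            (Filter.Eventually.of_forall fun y => ?_)
          simpa [Real.norm_eq_abs] using scal_bd G w x y i
      _ ≤ ∫ y in Set.Ioc (0:ℝ) 1, (n * G.C) * ‖w y‖ := by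
          refine setIntegral_mono_set (hw.2.norm.const_mul _)
            (Filter.Eventually.of_forall fun y => by have := G.C0; positivity)
            (HasSubset.Subset.eventuallyLE (Set.Ioc_subset_Ioc_right hx))
      _ = (n * G.C) * ∫ y in Set.Ioc (0:ℝ) 1, ‖w y‖ := MeasureTheory.integral_const_mul _ _
  · have h0 : appv G.G w x i = 0 := by
      rw [appv]
      have : (fun y => ∑ j, G.G x y i j * w y j) = fun _ => (0:ℝ) := by
        funext y
        have := G.supp x y (fun h => hx h.2.2)
        simp [this]
      rw [this, MeasureTheory.integral_zero]
    rw [h0, abs_zero]; exact hR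

lemma norm_appv_le (G : GoodKer n) (w : ℝ → Fin n → ℝ) (hw : Nice w) (x : ℝ) :
    ‖appv G.G w x‖ ≤ (n * G.C) * ∫ y in Set.Ioc (0:ℝ) 1, ‖w y‖ := by
  have hR : 0 ≤ (n * G.C) * ∫ y in Set.Ioc (0:ℝ) 1, ‖w y‖ := by
    have : 0 ≤ ∫ y in Set.Ioc (0:ℝ) 1, ‖w y‖ := integral_nonneg fun y => norm_nonneg _
    have := G.C0; positivity
  rw [pi_norm_le_iff_of_nonneg hR]
  intro i
  rw [Real.norm_eq_abs]
  exact abs_appv_le G w hw x i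

lemma nice_appv (G : GoodKer n) (w : ℝ → Fin n → ℝ) (hw : Nice w) :
    Nice (appv G.G w) := by
  refine ⟨meas_appv G w hw, ?_⟩
  refine Integrable.mono' (g := fun _ => (n * G.C) * ∫ y in Set.Ioc (0:ℝ) 1, ‖w y‖)
    (integrableOn_const (by simp [Real.volume_Ioc]))
    (meas_appv G w hw).aestronglyMeasurable
    (Filter.Eventually.of_forall fun x => norm_appv_le G w hw x)

lemma nice_sub (u v : ℝ → Fin n → ℝ) (hu : Nice u) (hv : Nice v) :
    Nice (fun x => u x - v x) :=
  ⟨hu.1.sub hv.1, hu.2.sub hv.2⟩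

/-- Convolution of kernels on the triangle. -/
noncomputable def convK (A B : ℝ → ℝ → Matrix (Fin n) (Fin n) ℝ) :
    ℝ → ℝ → Matrix (Fin n) (Fin n) ℝ :=
  fun x y => Matrix.of fun i j =>
    ∫ s, (Set.Ioc y x).indicator (fun s => ∑ k, A x s i k * B s y k j) s

/-- Iterated kernels. -/
noncomputable def iterK (G : GoodKer n) : ℕ → ℝ → ℝ → Matrix (Fin n) (Fin n) ℝ
  | 0 => G.G
  | m + 1 => convK (iterK G m) G.G

lemma iterK_meas (G : GoodKer n) (m : ℕ) (i j : Fin n) :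
    Measurable (fun p : ℝ × ℝ => iterK G m p.1 p.2 i j) := by
  induction m generalizing i j with
  | zero => exact G.meas i j
  | succ m ih =>
    set F : (ℝ × ℝ) × ℝ → ℝ := fun q =>
      if q.1.2 < q.2 ∧ q.2 ≤ q.1.1 then
        ∑ k, iterK G m q.1.1 q.2 i k * G.G q.2 q.1.2 k j else 0 with hF
    have hFm : StronglyMeasurable F := by
      rw [stronglyMeasurable_iff_measurable]
      refine Measurable.ite ?_ ?_ measurable_const
      · exact MeasurableSet.inter
          (measurableSet_lt (measurable_snd.comp measurable_fst) measurable_snd)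
          (measurableSet_le measurable_snd (measurable_fst.comp measurable_fst))
      · refine Finset.measurable_sum _ fun k _ => ?_
        exact ((ih i k).comp ((measurable_fst.comp measurable_fst).prodMk measurable_snd)).mul
          ((G.meas k j).comp (measurable_snd.prodMk (measurable_snd.comp measurable_fst)))
    have h2 := hFm.integral_prod_right' (ν := volume)
    rw [stronglyMeasurable_iff_measurable] at h2
    have heq : (fun p : ℝ × ℝ => iterK G (m + 1) p.1 p.2 i j) = fun p => ∫ s, F (p, s) := by
      funext p
      show convK (iterK G m) G.G p.1 p.2 i j = _
      rw [convK, Matrix.of_apply]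
      congr 1
      funext s
      simp [hF, Set.indicator_apply, Set.mem_Ioc]
    rw [heq]
    exact h2

lemma iterK_supp (G : GoodKer n) (m : ℕ) (x y : ℝ) (h : ¬ (0 ≤ y ∧ y ≤ x ∧ x ≤ 1)) :
    iterK G m x y = 0 := by
  induction m generalizing x y with
  | zero => exact G.supp x y h
  | succ m ih =>
    show convK (iterK G m) G.G x y = 0
    ext i j
    rw [convK, Matrix.of_apply, Matrix.zero_apply]
    by_cases h2 : y ≤ x
    · have hz : ∀ s, (Set.Ioc y x).indicator
          (fun s => ∑ k, iterK G m x s i k * G.G s y k j) s = 0 := by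
        intro s
        by_cases hs : s ∈ Set.Ioc y x
        · rw [Set.indicator_of_mem hs]
          by_cases h1 : 0 ≤ y
          · by_cases h3 : x ≤ 1
            · exact absurd ⟨h1, h2, h3⟩ h
            · have := ih x s (fun hh => h3 hh.2.2)
              simp [this]
          · have : ∀ s : ℝ, G.G s y = 0 := fun s => G.supp s y (fun hh => h1 hh.1)
            simp [this]
        · rw [Set.indicator_of_notMem hs]
      simp only [hz, MeasureTheory.integral_zero]
    · rw [Set.Ioc_eq_empty (fun hlt : y < x => h2 hlt.le)]
      simp

lemma iterK_bd (G : GoodKer n) (m : ℕ) (x y : ℝ) (i j : Fin n) :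
    |iterK G m x y i j| ≤ G.C * (n * G.C) ^ m * max (x - y) 0 ^ m / m.factorial := by
  have hC := G.C0
  induction m generalizing x y i j with
  | zero => simpa [iterK] using G.bd x y i j
  | succ m ih =>
    by_cases h2 : y ≤ x
    · have key : ∀ s, ‖(Set.Ioc y x).indicator
          (fun s => ∑ k, iterK G m x s i k * G.G s y k j) s‖ ≤
          (Set.Ioc y x).indicator
            (fun s => (n * G.C) * (G.C * (n * G.C) ^ m * (x - s) ^ m / m.factorial)) s := by
        intro s
        by_cases hs : s ∈ Set.Ioc y x
        · rw [Set.indicator_of_mem hs, Set.indicator_of_mem hs, Real.norm_eq_abs]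
          have hsx : s ≤ x := hs.2
          calc |∑ k, iterK G m x s i k * G.G s y k j|
              ≤ ∑ k, |iterK G m x s i k * G.G s y k j| := Finset.abs_sum_le_sum_abs _ _
            _ ≤ ∑ _k : Fin n, (G.C * (n * G.C) ^ m * (x - s) ^ m / m.factorial) * G.C := by
                refine Finset.sum_le_sum fun k _ => ?_
                rw [abs_mul]
                have h1 : |iterK G m x s i k| ≤
                    G.C * (n * G.C) ^ m * (x - s) ^ m / m.factorial := by
                  have := ih x s i k
                  rwa [max_eq_left (by linarith)] at this
                have hxs : (0:ℝ) ≤ x - s := by linarith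
                exact mul_le_mul h1 (G.bd _ _ _ _) (abs_nonneg _)
                  (div_nonneg (mul_nonneg (mul_nonneg hC (by positivity))
                    (pow_nonneg hxs m)) (Nat.cast_nonneg _))
            _ = (n * G.C) * (G.C * (n * G.C) ^ m * (x - s) ^ m / m.factorial) := by
                simp [Finset.sum_const, Finset.card_univ]; ring
        · rw [Set.indicator_of_notMem hs, Set.indicator_of_notMem hs, norm_zero]
      have hint : Integrable ((Set.Ioc y x).indicator
          (fun s => (n * G.C) * (G.C * (n * G.C) ^ m * (x - s) ^ m / m.factorial))) volume := by
        refine IntegrableOn.integrable_indicator ?_ measurableSet_Ioc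
        apply Continuous.integrableOn_Ioc
        continuity
      have h1 : |iterK G (m+1) x y i j| ≤ ∫ s, (Set.Ioc y x).indicator
          (fun s => (n * G.C) * (G.C * (n * G.C) ^ m * (x - s) ^ m / m.factorial)) s := by
        rw [← Real.norm_eq_abs]
        show ‖convK (iterK G m) G.G x y i j‖ ≤ _
        rw [convK, Matrix.of_apply]
        exact norm_integral_le_of_norm_le hint (Filter.Eventually.of_forall key)
      have h3 : ∫ s, (Set.Ioc y x).indicator
          (fun s => (n * G.C) * (G.C * (n * G.C) ^ m * (x - s) ^ m / m.factorial)) s =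
          (n * G.C) * (G.C * (n * G.C) ^ m / m.factorial) * ((x - y) ^ (m+1) / (m+1)) := by
        rw [MeasureTheory.integral_indicator measurableSet_Ioc]
        rw [← integral_of_le h2]
        have : ∀ s, (n * G.C) * (G.C * (n * G.C) ^ m * (x - s) ^ m / m.factorial) =
            ((n * G.C) * (G.C * (n * G.C) ^ m / m.factorial)) * (x - s) ^ m := by
          intro s; ring
        simp only [this]
        rw [intervalIntegral.integral_const_mul]
        congr 1
        have hsub := integral_comp_sub_left (a := y) (b := x) (fun u => u ^ m) x
        rw [hsub, sub_self, integral_pow]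
        rw [zero_pow (Nat.succ_ne_zero m), sub_zero]
      rw [h3] at h1
      refine h1.trans (le_of_eq ?_)
      rw [max_eq_left (by linarith)]
      rw [Nat.factorial_succ]
      push_cast
      field_simp
      ring
    · have h0 : iterK G (m+1) x y i j = 0 := by
        show convK (iterK G m) G.G x y i j = 0
        rw [convK, Matrix.of_apply, Set.Ioc_eq_empty (fun hlt : y < x => h2 hlt.le)]
        simp
      rw [h0, abs_zero]
      positivity

lemma iterK_bd' (G : GoodKer n) (m : ℕ) (x y : ℝ) (i j : Fin n) :
    |iterK G m x y i j| ≤ G.C * (n * G.C) ^ m / m.factorial := by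
  have hC := G.C0
  by_cases h : 0 ≤ y ∧ y ≤ x ∧ x ≤ 1
  · refine (iterK_bd G m x y i j).trans ?_
    have hmax : max (x - y) 0 ^ m ≤ 1 := by
      apply pow_le_one₀ (le_max_right _ _)
      rw [max_le_iff]
      constructor <;> [linarith [h.1, h.2.2]; norm_num]
    calc G.C * (n * G.C) ^ m * max (x - y) 0 ^ m / m.factorial
        ≤ G.C * (n * G.C) ^ m * 1 / m.factorial := by
          apply div_le_div_of_nonneg_right ?_ (by positivity)
          · exact mul_le_mul_of_nonneg_left hmax (by positivity)
      _ = G.C * (n * G.C) ^ m / m.factorial := by ring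
  · rw [iterK_supp G m x y h]
    simp only [Matrix.zero_apply, abs_zero]
    positivity

/-- iterated kernels as good kernels -/
noncomputable def iterGood (G : GoodKer n) (m : ℕ) : GoodKer n where
  G := iterK G m
  C := G.C * (n * G.C) ^ m / m.factorial
  C0 := by have := G.C0; positivity
  meas := iterK_meas G m
  bd := iterK_bd' G m
  supp := iterK_supp G m

/-- The key composition (Fubini) lemma. -/
lemma appv_comp (A B : GoodKer n) (w : ℝ → Fin n → ℝ) (hw : Nice w)
    (x : ℝ) (hx1 : x ≤ 1) (i : Fin n) :
    appv A.G (appv B.G w) x i = appv (convK A.G B.G) w x i := by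
  have hAC := A.C0
  have hBC := B.C0
  set F : ℝ → ℝ → ℝ := fun s t => ∑ j, ∑ k, A.G x s i j * B.G s t j k * w t k with hFdef
  set Q : ℝ × ℝ → ℝ := fun q =>
    if 0 < q.2 ∧ q.2 ≤ q.1 ∧ 0 < q.1 ∧ q.1 ≤ x then F q.1 q.2 else 0 with hQdef
  have hFbd : ∀ s t, |F s t| ≤ ((n : ℝ) * n * (A.C * B.C)) * ‖w t‖ := by
    intro s t
    calc |F s t| ≤ ∑ j, |∑ k, A.G x s i j * B.G s t j k * w t k| :=
          Finset.abs_sum_le_sum_abs _ _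
      _ ≤ ∑ _j : Fin n, ((n : ℝ) * (A.C * B.C)) * ‖w t‖ := by
          refine Finset.sum_le_sum fun j _ => ?_
          calc |∑ k, A.G x s i j * B.G s t j k * w t k|
              ≤ ∑ k, |A.G x s i j * B.G s t j k * w t k| := Finset.abs_sum_le_sum_abs _ _
            _ ≤ ∑ _k : Fin n, (A.C * B.C) * ‖w t‖ := by
                refine Finset.sum_le_sum fun k _ => ?_
                rw [abs_mul, abs_mul]
                have h1 : |A.G x s i j| * |B.G s t j k| ≤ A.C * B.C :=
                  mul_le_mul (A.bd _ _ _ _) (B.bd _ _ _ _) (abs_nonneg _) hAC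
                have h2 : |w t k| ≤ ‖w t‖ := by
                  simpa [Real.norm_eq_abs] using norm_le_pi_norm (w t) k
                exact mul_le_mul h1 h2 (abs_nonneg _) (by positivity)
            _ = ((n : ℝ) * (A.C * B.C)) * ‖w t‖ := by
                simp [Finset.sum_const, Finset.card_univ]; ring
      _ = ((n : ℝ) * n * (A.C * B.C)) * ‖w t‖ := by
          simp [Finset.sum_const, Finset.card_univ]; ring
  have measF : Measurable (fun q : ℝ × ℝ => F q.1 q.2) := by
    refine Finset.measurable_sum _ fun j _ => ?_
    refine Finset.measurable_sum _ fun k _ => ?_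
    refine (((A.meas i j).comp (measurable_const.prodMk measurable_fst)).mul
      (B.meas j k)).mul ((measurable_pi_apply k).comp (hw.1.comp measurable_snd))
  have measQ : Measurable Q := by
    refine Measurable.ite ?_ measF measurable_const
    refine MeasurableSet.inter (measurableSet_lt measurable_const measurable_snd) ?_
    refine MeasurableSet.inter (measurableSet_le measurable_snd measurable_fst) ?_
    exact MeasurableSet.inter (measurableSet_lt measurable_const measurable_fst)
      (measurableSet_le measurable_fst measurable_const)
  have intQ : Integrable Q (volume.prod volume) := by
    refine Integrable.mono' (g := fun q =>
        (Set.Ioc (0:ℝ) x).indicator (fun _ => (1:ℝ)) q.1 *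
        (Set.Ioc (0:ℝ) 1).indicator (fun t => ((n : ℝ) * n * (A.C * B.C)) * ‖w t‖) q.2) ?_
      measQ.aestronglyMeasurable (Filter.Eventually.of_forall fun q => ?_)
    · exact Integrable.mul_prod
        (IntegrableOn.integrable_indicator
          (integrableOn_const (by simp [Real.volume_Ioc]))
          measurableSet_Ioc)
        (IntegrableOn.integrable_indicator (hw.2.norm.const_mul _) measurableSet_Ioc)
    · rw [hQdef]
      by_cases hq : 0 < q.2 ∧ q.2 ≤ q.1 ∧ 0 < q.1 ∧ q.1 ≤ x
      · simp only [if_pos hq]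
        have h1 : q.1 ∈ Set.Ioc (0:ℝ) x := ⟨hq.2.2.1, hq.2.2.2⟩
        have h2 : q.2 ∈ Set.Ioc (0:ℝ) 1 := ⟨hq.1, le_trans hq.2.1 (le_trans hq.2.2.2 hx1)⟩
        rw [Set.indicator_of_mem h1, Set.indicator_of_mem h2, one_mul, Real.norm_eq_abs]
        exact hFbd q.1 q.2
      · simp only [if_neg hq, norm_zero]
        apply mul_nonneg
        · exact Set.indicator_nonneg (fun _ _ => zero_le_one) _
        · refine Set.indicator_nonneg (fun t _ => by positivity) _
  -- step 1 : rewrite LHS as iterated integral of Q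
  have step1 : ∀ s ∈ Set.Ioc (0:ℝ) x,
      (∑ j, A.G x s i j * appv B.G w s j) = ∫ t, Q (s, t) := by
    intro s hs
    have e1 : ∀ j, A.G x s i j * appv B.G w s j =
        ∫ t in Set.Ioc (0:ℝ) s, A.G x s i j * ∑ k, B.G s t j k * w t k := by
      intro j
      rw [appv, MeasureTheory.integral_const_mul]
    rw [Finset.sum_congr rfl fun j _ => e1 j]
    rw [← integral_finset_sum _ (fun j _ => (intg_scal B w hw s j).const_mul _)]
    have e2 : ∀ t, (∑ j, A.G x s i j * ∑ k, B.G s t j k * w t k) = F s t := by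
      intro t
      rw [hFdef]
      refine Finset.sum_congr rfl fun j _ => ?_
      rw [Finset.mul_sum]
      refine Finset.sum_congr rfl fun k _ => by ring
    rw [setIntegral_congr_fun measurableSet_Ioc (fun t _ => e2 t)]
    rw [← MeasureTheory.integral_indicator measurableSet_Ioc]
    congr 1
    funext t
    simp only [hQdef, Set.indicator_apply]
    by_cases ht : t ∈ Set.Ioc (0:ℝ) s
    · rw [if_pos ht, if_pos (show 0 < t ∧ t ≤ s ∧ 0 < s ∧ s ≤ x from ⟨ht.1, ht.2, hs.1, hs.2⟩)]
    · rw [if_neg ht, if_neg]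
      intro hcon
      exact ht ⟨hcon.1, hcon.2.1⟩
  have step2 : appv A.G (appv B.G w) x i = ∫ s, ∫ t, Q (s, t) := by
    rw [appv, setIntegral_congr_fun measurableSet_Ioc (fun s hs => step1 s hs)]
    rw [← MeasureTheory.integral_indicator measurableSet_Ioc]
    congr 1
    funext s
    rw [Set.indicator_apply]
    by_cases hs : s ∈ Set.Ioc (0:ℝ) x
    · rw [if_pos hs]
    · rw [if_neg hs]
      have : ∀ t, Q (s, t) = 0 := by
        intro t
        simp only [hQdef]
        rw [if_neg]
        intro hcon
        exact hs ⟨hcon.2.2.1, hcon.2.2.2⟩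
      simp only [this, MeasureTheory.integral_zero]
  -- swap
  have step3 : (∫ s, ∫ t, Q (s, t)) = ∫ t, ∫ s, Q (s, t) :=
    integral_integral_swap (f := fun s t => Q (s, t)) intQ
  -- step 4 : identify with RHS
  have hind : ∀ t j, Integrable
      ((Set.Ioc t x).indicator (fun s => ∑ k, A.G x s i k * B.G s t k j)) volume := by
    intro t j
    refine IntegrableOn.integrable_indicator ?_ measurableSet_Ioc
    refine Integrable.mono' (g := fun _ => (n : ℝ) * (A.C * B.C))
      (integrableOn_const (by simp [Real.volume_Ioc]))
      (Measurable.aestronglyMeasurable ?_) (Filter.Eventually.of_forall fun s => ?_)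
    · refine Finset.measurable_sum _ fun k _ => ?_
      exact ((A.meas i k).comp (measurable_const.prodMk measurable_id)).mul
        ((B.meas k j).comp (measurable_id.prodMk measurable_const))
    · rw [Real.norm_eq_abs]
      calc |∑ k, A.G x s i k * B.G s t k j| ≤ ∑ k, |A.G x s i k * B.G s t k j| :=
            Finset.abs_sum_le_sum_abs _ _
        _ ≤ ∑ _k : Fin n, A.C * B.C := by
            refine Finset.sum_le_sum fun k _ => ?_
            rw [abs_mul]
            exact mul_le_mul (A.bd _ _ _ _) (B.bd _ _ _ _) (abs_nonneg _) hAC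
        _ = (n : ℝ) * (A.C * B.C) := by
            simp [Finset.sum_const, Finset.card_univ]
  have step4 : (∫ t, ∫ s, Q (s, t)) = appv (convK A.G B.G) w x i := by
    have e3 : (fun t => ∫ s, Q (s, t)) = fun t =>
        (Set.Ioc (0:ℝ) x).indicator
          (fun t => ∫ s in Set.Ioc t x, F s t) t := by
      funext t
      rw [Set.indicator_apply]
      by_cases ht : t ∈ Set.Ioc (0:ℝ) x
      · rw [if_pos ht]
        have e4 : ∀ s, Q (s, t) = (Set.Icc t x).indicator (fun s => F s t) s := by
          intro s
          simp only [hQdef, Set.indicator_apply]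
          by_cases hst : s ∈ Set.Icc t x
          · rw [if_pos (show 0 < t ∧ t ≤ s ∧ 0 < s ∧ s ≤ x from
              ⟨ht.1, hst.1, lt_of_lt_of_le ht.1 hst.1, hst.2⟩), if_pos hst]
          · rw [if_neg hst, if_neg]
            intro hcon
            exact hst ⟨hcon.2.1, hcon.2.2.2⟩
        simp only [e4]
        rw [MeasureTheory.integral_indicator measurableSet_Icc]
        exact (MeasureTheory.integral_Icc_eq_integral_Ioc)
      · rw [if_neg ht]
        have : ∀ s, Q (s, t) = 0 := by
          intro s
          simp only [hQdef]
          rw [if_neg]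
          intro hcon
          refine ht ⟨hcon.1, le_trans hcon.2.1 hcon.2.2.2⟩
        simp only [this, MeasureTheory.integral_zero]
    rw [e3, MeasureTheory.integral_indicator measurableSet_Ioc]
    rw [appv]
    refine setIntegral_congr_fun measurableSet_Ioc (fun t ht => ?_)
    have e5 : ∀ j, convK A.G B.G x t i j * w t j =
        ∫ s, (Set.Ioc t x).indicator (fun s => ∑ k, A.G x s i k * B.G s t k j) s * w t j := by
      intro j
      rw [convK, Matrix.of_apply, MeasureTheory.integral_mul_const]
    rw [Finset.sum_congr rfl fun j _ => e5 j]
    rw [← integral_finset_sum _ (fun j _ => (hind t j).mul_const _)]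
    rw [← MeasureTheory.integral_indicator measurableSet_Ioc]
    congr 1
    funext s
    by_cases hst : s ∈ Set.Ioc t x
    · rw [Set.indicator_of_mem hst]
      have e6 : ∀ j : Fin n, (Set.Ioc t x).indicator
          (fun s => ∑ k, A.G x s i k * B.G s t k j) s * w t j =
          ∑ k, A.G x s i k * B.G s t k j * w t j := by
        intro j
        rw [Set.indicator_of_mem hst, Finset.sum_mul]
      rw [Finset.sum_congr rfl fun j _ => e6 j, hFdef]
      exact Finset.sum_comm
    · rw [Set.indicator_of_notMem hst]
      symm
      refine Finset.sum_eq_zero fun j _ => ?_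
      rw [Set.indicator_of_notMem hst, zero_mul]
  rw [step2, step3, step4]

/-- The resolvent kernel. -/
noncomputable def resK (G : GoodKer n) : ℝ → ℝ → Matrix (Fin n) (Fin n) ℝ :=
  fun x y => Matrix.of fun i j => - ∑' m, iterK G m x y i j

lemma summable_iterK (G : GoodKer n) (x y : ℝ) (i j : Fin n) :
    Summable (fun m => iterK G m x y i j) := by
  have hC := G.C0
  refine Summable.of_norm_bounded
    (g := fun m => G.C * ((n * G.C * max (x - y) 0) ^ m / m.factorial)) ?_ ?_
  · exact (Real.summable_pow_div_factorial (n * G.C * max (x - y) 0)).mul_left G.C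
  · intro m
    rw [Real.norm_eq_abs]
    refine (iterK_bd G m x y i j).trans (le_of_eq ?_)
    rw [mul_pow]
    ring

lemma summable_bd (G : GoodKer n) :
    Summable (fun m : ℕ => G.C * (n * G.C) ^ m / m.factorial) := by
  refine ((Real.summable_pow_div_factorial (n * G.C)).mul_left G.C).congr fun m => ?_
  rw [mul_div_assoc]

noncomputable def resGood (G : GoodKer n) : GoodKer n where
  G := resK G
  C := ∑' m : ℕ, G.C * (n * G.C) ^ m / m.factorial
  C0 := by
    apply tsum_nonneg; intro m; have := G.C0; positivity
  meas := by
    intro i j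
    have hpart : ∀ N : ℕ, Measurable
        (fun p : ℝ × ℝ => ∑ m ∈ Finset.range N, iterK G m p.1 p.2 i j) :=
      fun N => Finset.measurable_sum _ (fun m _ => iterK_meas G m i j)
    have hmeas : Measurable (fun p : ℝ × ℝ => ∑' m, iterK G m p.1 p.2 i j) := by
      apply measurable_of_tendsto_metrizable hpart
      rw [tendsto_pi_nhds]
      intro p
      exact (summable_iterK G p.1 p.2 i j).hasSum.tendsto_sum_nat
    exact hmeas.neg
  bd := by
    intro x y i j
    show |-∑' m, iterK G m x y i j| ≤ _
    rw [abs_neg]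
    have hs : Summable (fun m => |iterK G m x y i j|) :=
      Summable.of_nonneg_of_le (fun _ => abs_nonneg _) (fun m => iterK_bd' G m x y i j)
        (summable_bd G)
    calc |∑' m, iterK G m x y i j| ≤ ∑' m, |iterK G m x y i j| := by
          simpa [Real.norm_eq_abs] using
            norm_tsum_le_tsum_norm (f := fun m => iterK G m x y i j)
              (by simpa [Real.norm_eq_abs] using hs)
      _ ≤ ∑' m : ℕ, G.C * (n * G.C) ^ m / m.factorial :=
          Summable.tsum_le_tsum (fun m => iterK_bd' G m x y i j) hs (summable_bd G)
  supp := by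
    intro x y h
    ext i j
    have hz : ∀ m, iterK G m x y i j = 0 := by
      intro m; rw [iterK_supp G m x y h]; rfl
    show -∑' m, iterK G m x y i j = (0 : Matrix (Fin n) (Fin n) ℝ) i j
    simp [hz]

/-- Series expansion of the resolvent application. -/
lemma appv_res (G : GoodKer n) (w : ℝ → Fin n → ℝ) (hw : Nice w)
    (x : ℝ) (hx1 : x ≤ 1) (i : Fin n) :
    appv (resK G) w x i = - ∑' m, appv (iterK G m) w x i := by
  have hC := G.C0
  -- integrand rewrite
  have h1 : ∀ y, (∑ j, resK G x y i j * w y j) =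
      - ∑' m, ∑ j, iterK G m x y i j * w y j := by
    intro y
    have : ∀ j : Fin n, resK G x y i j * w y j =
        - ∑' m, iterK G m x y i j * w y j := by
      intro j
      show (-∑' m, iterK G m x y i j) * w y j = _
      rw [neg_mul, ← tsum_mul_right]
    rw [Finset.sum_congr rfl (fun j _ => this j), Finset.sum_neg_distrib]
    congr 1
    exact (Summable.tsum_finsetSum (fun j _ => (summable_iterK G x y i j).mul_right _)).symm
  show (∫ y in Set.Ioc 0 x, ∑ j, resK G x y i j * w y j) = _
  rw [setIntegral_congr_fun measurableSet_Ioc (fun y _ => h1 y)]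
  rw [MeasureTheory.integral_neg]
  congr 1
  -- exchange sum and integral
  set c : ℕ → ℝ := fun m => (n : ℝ) * (G.C * (n * G.C) ^ m / m.factorial) with hc
  have hc0 : ∀ m, 0 ≤ c m := fun m => by have := G.C0; positivity
  have hcs : Summable c := ((summable_bd G).mul_left _)
  have key : ∑' m, ∫⁻ y in Set.Ioc (0:ℝ) x, ‖∑ j, iterK G m x y i j * w y j‖₊ ≠ ⊤ := by
    set J := ∫⁻ y in Set.Ioc (0:ℝ) 1, ‖w y‖₊ with hJ
    have hJt : J ≠ ⊤ := hw.2.2.ne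
    have hb : ∀ m, (∫⁻ y in Set.Ioc (0:ℝ) x, ‖∑ j, iterK G m x y i j * w y j‖₊) ≤
        ENNReal.ofReal (c m) * J := by
      intro m
      have step : ∀ y, (‖∑ j, iterK G m x y i j * w y j‖₊ : ENNReal) ≤
          ENNReal.ofReal (c m) * ‖w y‖₊ := by
        intro y
        rw [← enorm_eq_nnnorm, ← enorm_eq_nnnorm (w y), ← ofReal_norm, ← ofReal_norm (w y),
          ← ENNReal.ofReal_mul (hc0 m)]
        apply ENNReal.ofReal_le_ofReal
        rw [Real.norm_eq_abs]
        exact scal_bd (iterGood G m) w x y i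
      calc (∫⁻ y in Set.Ioc (0:ℝ) x, ‖∑ j, iterK G m x y i j * w y j‖₊)
          ≤ ∫⁻ y in Set.Ioc (0:ℝ) x, ENNReal.ofReal (c m) * ‖w y‖₊ :=
            lintegral_mono (fun y => step y)
        _ ≤ ∫⁻ y in Set.Ioc (0:ℝ) 1, ENNReal.ofReal (c m) * ‖w y‖₊ := by
            by_cases hx0 : x ≤ 1
            · exact lintegral_mono' (Measure.restrict_mono (Set.Ioc_subset_Ioc_right hx0) le_rfl)
                le_rfl
            · exact absurd hx1 hx0
        _ = ENNReal.ofReal (c m) * J := by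
            rw [hJ, lintegral_const_mul' _ _ ENNReal.ofReal_ne_top]
    refine ne_top_of_le_ne_top ?_ (ENNReal.tsum_le_tsum hb)
    rw [ENNReal.tsum_mul_right]
    exact ENNReal.mul_ne_top (by rw [← ENNReal.ofReal_tsum_of_nonneg hc0 hcs]; exact ENNReal.ofReal_ne_top) hJt
  have hexch := MeasureTheory.integral_tsum
    (μ := volume.restrict (Set.Ioc 0 x))
    (f := fun m y => ∑ j, iterK G m x y i j * w y j)
    (fun m => (meas_scal (iterGood G m) w hw x i).aestronglyMeasurable)
    key
  exact hexch

lemma summable_appv_iterK (G : GoodKer n) (w : ℝ → Fin n → ℝ) (hw : Nice w)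
    (x : ℝ) (i : Fin n) :
    Summable (fun m => appv (iterK G m) w x i) := by
  have hC := G.C0
  set I := ∫ y in Set.Ioc (0:ℝ) 1, ‖w y‖ with hI
  have hI0 : 0 ≤ I := integral_nonneg fun y => norm_nonneg _
  refine Summable.of_norm_bounded
    (g := fun m : ℕ => (n * I * G.C) * ((n * G.C) ^ m / m.factorial)) ?_ ?_
  · exact (Real.summable_pow_div_factorial (n * G.C)).mul_left _
  · intro m
    rw [Real.norm_eq_abs]
    have := abs_appv_le (iterGood G m) w hw x i
    refine this.trans (le_of_eq ?_)
    show (n : ℝ) * (G.C * (n * G.C) ^ m / m.factorial) * I = _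
    ring

/-- Main identity: `(I - T_{resK}) (I - T_G) = I` pointwise on `(0,1]`. -/
lemma resGood_G (G : GoodKer n) : (resGood G).G = resK G := rfl

lemma appv_congr_on (G : GoodKer n) (f g : ℝ → Fin n → ℝ)
    (h : ∀ z ∈ Set.Ioc (0:ℝ) 1, f z = g z) (x : ℝ) (hx1 : x ≤ 1) :
    appv G.G f x = appv G.G g x := by
  funext i
  rw [appv, appv]
  refine setIntegral_congr_fun measurableSet_Ioc (fun y hy => ?_)
  rw [h y ⟨hy.1, hy.2.trans hx1⟩]

lemma lemA (G : GoodKer n) (w : ℝ → Fin n → ℝ) (hw : Nice w)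
    (x : ℝ) (hx : x ∈ Set.Ioc (0:ℝ) 1) :
    (fun z => w z - appv G.G w z) x -
      appv (resK G) (fun z => w z - appv G.G w z) x = w x := by
  have hu : Nice (fun z => w z - appv G.G w z) := nice_sub _ _ hw (nice_appv G w hw)
  funext i
  simp only [Pi.sub_apply]
  have hser := appv_res G _ hu x hx.2 i
  have hterm : ∀ m, appv (iterK G m) (fun z => w z - appv G.G w z) x i =
      appv (iterK G m) w x i - appv (iterK G m) (appv G.G w) x i := by
    intro m
    rw [appv, appv, appv, ← integral_sub
      (show Integrable (fun y => ∑ j, iterK G m x y i j * w y j)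
        (volume.restrict (Set.Ioc 0 x)) from intg_scal (iterGood G m) w hw x i)
      (show Integrable (fun y => ∑ j, iterK G m x y i j * appv G.G w y j)
        (volume.restrict (Set.Ioc 0 x)) from
        intg_scal (iterGood G m) (appv G.G w) (nice_appv G w hw) x i)]
    refine setIntegral_congr_fun measurableSet_Ioc (fun y _ => ?_)
    rw [← Finset.sum_sub_distrib]
    refine Finset.sum_congr rfl fun j _ => ?_
    rw [Pi.sub_apply, mul_sub]
  have hcomp : ∀ m, appv (iterK G m) (appv G.G w) x i = appv (iterK G (m+1)) w x i := by
    intro m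
    exact appv_comp (iterGood G m) G w hw x hx.2 i
  set a : ℕ → ℝ := fun m => appv (iterK G m) w x i with ha
  have hsum : Summable a := summable_appv_iterK G w hw x i
  have hsum' : Summable (fun m => a (m + 1)) := (summable_nat_add_iff 1).2 hsum
  have hres : appv (resK G) (fun z => w z - appv G.G w z) x i = - a 0 := by
    rw [hser]
    have he : ∀ m, appv (iterK G m) (fun z => w z - appv G.G w z) x i = a m - a (m + 1) := by
      intro m
      rw [hterm m, hcomp m]
    rw [tsum_congr he, Summable.tsum_sub hsum hsum', Summable.tsum_eq_zero_add hsum]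
    ring
  rw [hres]
  have h0 : a 0 = appv G.G w x i := rfl
  rw [h0]
  ring

/-- Second identity via left-right inverse trick. -/
lemma lemB (G : GoodKer n) (w : ℝ → Fin n → ℝ) (hw : Nice w)
    (x : ℝ) (hx : x ∈ Set.Ioc (0:ℝ) 1) :
    (fun z => w z - appv (resK G) w z) x -
      appv G.G (fun z => w z - appv (resK G) w z) x = w x := by
  set b := resGood G with hb
  have hbG : b.G = resK G := rfl
  have key : ∀ v : ℝ → Fin n → ℝ, Nice v → ∀ x' ∈ Set.Ioc (0:ℝ) 1,
      appv G.G v x' = appv (resK b) v x' := by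
    intro v hv x' hx'
    set f : ℝ → Fin n → ℝ := fun z => v z - appv G.G v z with hf
    have hfn : Nice f := nice_sub _ _ hv (nice_appv G v hv)
    set q : ℝ → Fin n → ℝ := fun z => f z - appv (resK G) f z with hq
    have hqn : Nice q := nice_sub _ _ hfn (nice_appv b f hfn)
    have hqv : ∀ z ∈ Set.Ioc (0:ℝ) 1, q z = v z := fun z hz => lemA G v hv z hz
    have hstar : q x' - appv (resK b) q x' = f x' := lemA b f hfn x' hx'
    have hcong : appv (resK b) q x' = appv (resK b) v x' :=
      appv_congr_on (resGood b) q v hqv x' hx'.2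
    rw [hcong, hqv x' hx'] at hstar
    -- hstar : v x' - appv (resK b) v x' = v x' - appv G.G v x'
    have : v x' - appv (resK b) v x' = v x' - appv G.G v x' := hstar
    exact (sub_right_inj.mp this).symm
  set W : ℝ → Fin n → ℝ := fun z => w z - appv (resK G) w z with hW
  have hWn : Nice W := nice_sub _ _ hw (nice_appv (resGood G) w hw)
  have h2 := key W hWn x hx
  have h3 : W x - appv (resK b) W x = w x := lemA b w hw x hx
  show W x - appv G.G W x = w x
  rw [h2]
  exact h3

/-- Bridge: interval integral of mulVec equals appv. -/
lemma bridge (G : GoodKer n) (v : ℝ → Fin n → ℝ) (hv : Nice v) (x : ℝ) (hx : 0 ≤ x) :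
    (∫ y in (0:ℝ)..x, (G.G x y).mulVec (v y)) = appv G.G v x := by
  rw [integral_of_le hx]
  funext i
  have h := (ContinuousLinearMap.proj (R := ℝ) (φ := fun _ : Fin n => ℝ) i).integral_comp_comm
    (intg_vec G v hv x)
  have h' : (∫ y in Set.Ioc (0:ℝ) x, (G.G x y).mulVec (v y)) i =
      ∫ y in Set.Ioc (0:ℝ) x, (G.G x y).mulVec (v y) i := h.symm
  rw [h', appv]
  exact setIntegral_congr_fun measurableSet_Ioc (fun y _ => mulVec_apply_eq G v x y i)


noncomputable def truncGood (n : ℕ) (K : ℝ → ℝ → Matrix (Fin n) (Fin n) ℝ)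
    (CK : ℝ) (hCK : 0 ≤ CK)
    (hKmeas : ∀ i j, Measurable (fun p : ℝ × ℝ => K p.1 p.2 i j))
    (hKbd : ∀ x y : ℝ, 0 ≤ y → y ≤ x → x ≤ 1 → ∀ i j, |K x y i j| ≤ CK) : GoodKer n where
  G := fun x y => if 0 ≤ y ∧ y ≤ x ∧ x ≤ 1 then K x y else 0
  C := CK
  C0 := hCK
  meas := by
    intro i j
    have he : (fun p : ℝ × ℝ =>
        (if 0 ≤ p.2 ∧ p.2 ≤ p.1 ∧ p.1 ≤ 1 then K p.1 p.2 else 0) i j) =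
        fun p : ℝ × ℝ => if 0 ≤ p.2 ∧ p.2 ≤ p.1 ∧ p.1 ≤ 1 then K p.1 p.2 i j else 0 := by
      funext p
      by_cases h : 0 ≤ p.2 ∧ p.2 ≤ p.1 ∧ p.1 ≤ 1 <;> simp [h]
    rw [he]
    refine Measurable.ite ?_ (hKmeas i j) measurable_const
    exact (measurableSet_le measurable_const measurable_snd).inter
      ((measurableSet_le measurable_snd measurable_fst).inter
        (measurableSet_le measurable_fst measurable_const))
  bd := by
    intro x y i j
    show |(if 0 ≤ y ∧ y ≤ x ∧ x ≤ 1 then K x y else 0) i j| ≤ CK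
    by_cases h : 0 ≤ y ∧ y ≤ x ∧ x ≤ 1
    · rw [if_pos h]; exact hKbd x y h.1 h.2.1 h.2.2 i j
    · rw [if_neg h]; simpa using hCK
  supp := fun x y h => if_neg h

end Volterra

/-- The Volterra transform of the second kind `u(x) = w(x) − ∫₀ˣ K(x,y) w(y) dy`, with bounded
measurable kernel on the triangle, is a bounded operator on L² which is invertible, with inverse
of the same form `I − T_L` for some bounded measurable kernel `L`. -/
theorem stmt9 (n : ℕ) (hn : 1 ≤ n) (K : ℝ → ℝ → Matrix (Fin n) (Fin n) ℝ)
    (hKmeas : ∀ i j, Measurable (fun p : ℝ × ℝ => K p.1 p.2 i j))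
    (CK : ℝ) (hKbd : ∀ x y : ℝ, 0 ≤ y → y ≤ x → x ≤ 1 → ∀ i j, |K x y i j| ≤ CK) :
    -- boundedness of T_K on L²(0,1)ⁿ
    (∃ Cb : ℝ, 0 ≤ Cb ∧ ∀ w : ℝ → Fin n → ℝ,
      (∀ i, MeasureTheory.MemLp (fun x => w x i) 2 (volume.restrict (Set.Ioo (0:ℝ) 1))) →
      (∫ x in (0:ℝ)..1, ‖∫ y in (0:ℝ)..x, (K x y).mulVec (w y)‖ ^ 2) ≤
        Cb * ∫ x in (0:ℝ)..1, ‖w x‖ ^ 2) ∧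
    -- invertibility: the inverse is again a Volterra transform of the second kind
    (∃ L : ℝ → ℝ → Matrix (Fin n) (Fin n) ℝ,
      (∀ i j, Measurable (fun p : ℝ × ℝ => L p.1 p.2 i j)) ∧
      (∃ CL : ℝ, ∀ x y : ℝ, 0 ≤ y → y ≤ x → x ≤ 1 → ∀ i j, |L x y i j| ≤ CL) ∧
      (∀ w : ℝ → Fin n → ℝ,
        (∀ i, MeasureTheory.MemLp (fun x => w x i) 2 (volume.restrict (Set.Ioo (0:ℝ) 1))) →
        (∀ᵐ x ∂(volume.restrict (Set.Ioo (0:ℝ) 1)),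
          (fun z => w z - ∫ y in (0:ℝ)..z, (K z y).mulVec (w y)) x -
            (∫ y in (0:ℝ)..x,
              (L x y).mulVec ((fun z => w z - ∫ y' in (0:ℝ)..z, (K z y').mulVec (w y')) y)) =
            w x) ∧
        (∀ᵐ x ∂(volume.restrict (Set.Ioo (0:ℝ) 1)),
          (fun z => w z - ∫ y in (0:ℝ)..z, (L z y).mulVec (w y)) x -
            (∫ y in (0:ℝ)..x,
              (K x y).mulVec ((fun z => w z - ∫ y' in (0:ℝ)..z, (L z y').mulVec (w y')) y)) =
            w x))) := by
  -- nonnegativity of CK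
  have i0 : Fin n := ⟨0, hn⟩
  have hCK : 0 ≤ CK := le_trans (abs_nonneg _) (hKbd 1 0 le_rfl zero_le_one le_rfl i0 i0)
  set μ : Measure ℝ := volume.restrict (Set.Ioo (0:ℝ) 1) with hμ
  haveI : IsProbabilityMeasure μ := by
    constructor
    rw [hμ, Measure.restrict_apply_univ, Real.volume_Ioo]
    norm_num
  have hres : volume.restrict (Set.Ioo (0:ℝ) 1) = volume.restrict (Set.Ioc (0:ℝ) 1) :=
    Measure.restrict_congr_set Ioo_ae_eq_Ioc
  have hres2 : μ = volume.restrict (Set.Ioc (0:ℝ) 1) := hμ.trans hres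
  set k0 : GoodKer n := truncGood n K CK hCK hKmeas hKbd with hk0
  have hk0G : ∀ x y : ℝ, 0 < y → y ≤ x → x ≤ 1 → K x y = k0.G x y := by
    intro x y h1 h2 h3
    show K x y = if 0 ≤ y ∧ y ≤ x ∧ x ≤ 1 then K x y else 0
    rw [if_pos ⟨h1.le, h2, h3⟩]
  -- preparation: measurable representative
  have hprep : ∀ w : ℝ → Fin n → ℝ,
      (∀ i, MeasureTheory.MemLp (fun x => w x i) 2 μ) →
      ∃ g : ℝ → Fin n → ℝ, (∀ᵐ x ∂μ, w x = g x) ∧ Nice g ∧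
        MeasureTheory.MemLp (fun x => ‖g x‖) 2 μ := by
    intro w hw
    set g : ℝ → Fin n → ℝ := fun x i => ((hw i).1.mk (fun x => w x i)) x with hgdef
    have hgm : Measurable g :=
      measurable_pi_lambda _ fun i => ((hw i).1.stronglyMeasurable_mk).measurable
    have hwg : ∀ᵐ x ∂μ, w x = g x := by
      have hall : ∀ᵐ x ∂μ, ∀ i, w x i = g x i := ae_all_iff.2 (fun i => (hw i).1.ae_eq_mk)
      exact hall.mono fun x hx => funext hx
    have hgi : ∀ i, MeasureTheory.MemLp (fun x => g x i) 2 μ := fun i =>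
      MeasureTheory.MemLp.ae_eq (hwg.mono fun x hx => congrFun hx i) (hw i)
    have hbd : ∀ x, ‖g x‖ ≤ ∑ i : Fin n, |g x i| := by
      intro x
      rw [pi_norm_le_iff_of_nonneg (Finset.sum_nonneg fun i _ => abs_nonneg _)]
      intro i
      rw [Real.norm_eq_abs]
      exact Finset.single_le_sum (fun i _ => abs_nonneg (g x i)) (Finset.mem_univ i)
    have hsumM : MeasureTheory.MemLp (∑ i : Fin n, fun x => |g x i|) 2 μ :=
      memLp_finset_sum' _ (fun i (_ : i ∈ Finset.univ) => by
        simpa [Real.norm_eq_abs] using (hgi i).norm)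
    have hf2 : MeasureTheory.MemLp (fun x => ‖g x‖) 2 μ := by
      refine MeasureTheory.MemLp.of_le hsumM hgm.norm.aestronglyMeasurable
        (Filter.Eventually.of_forall fun x => ?_)
      have hax : (∑ i : Fin n, fun x => |g x i|) x = ∑ i : Fin n, |g x i| := by
        simp [Finset.sum_apply]
      rw [Real.norm_eq_abs, abs_norm, hax, Real.norm_eq_abs,
        abs_of_nonneg (Finset.sum_nonneg fun i _ => abs_nonneg _)]
      exact hbd x
    have hgint : IntegrableOn g (Set.Ioc 0 1) volume := by
      have hgi1 : ∀ i, Integrable (fun x => g x i) μ := fun i =>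
        memLp_one_iff_integrable.mp ((hgi i).mono_exponent (by norm_num))
      have hsum : Integrable (fun x => ∑ i : Fin n, |g x i|) μ :=
        integrable_finset_sum _ (fun i _ => (hgi1 i).abs)
      have : Integrable g μ := by
        refine Integrable.mono' hsum hgm.aestronglyMeasurable
          (Filter.Eventually.of_forall fun x => ?_)
        exact hbd x
      rwa [IntegrableOn, ← hres2]
    exact ⟨g, hwg, ⟨hgm, hgint⟩, hf2⟩
  -- generic inner-integral bridge
  have hGen : ∀ (A : GoodKer n) (M : ℝ → ℝ → Matrix (Fin n) (Fin n) ℝ),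
      (∀ x y : ℝ, 0 < y → y ≤ x → x ≤ 1 → M x y = A.G x y) →
      ∀ (w g : ℝ → Fin n → ℝ), (∀ᵐ x ∂μ, w x = g x) → Nice g →
      ∀ z ∈ Set.Ioc (0:ℝ) 1,
        (∫ y in (0:ℝ)..z, (M z y).mulVec (w y)) = appv A.G g z := by
    intro A M hM w g hwg hg z hz
    have hwg' : ∀ᵐ x ∂volume.restrict (Set.Ioc (0:ℝ) 1), w x = g x := by rwa [hres2] at hwg
    have hwz : ∀ᵐ y ∂volume.restrict (Set.Ioc (0:ℝ) z), w y = g y :=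
      ae_restrict_of_ae_restrict_of_subset (Set.Ioc_subset_Ioc_right hz.2) hwg'
    rw [integral_of_le hz.1.le]
    have hcong : (∫ y in Set.Ioc (0:ℝ) z, (M z y).mulVec (w y)) =
        ∫ y in Set.Ioc (0:ℝ) z, (A.G z y).mulVec (g y) := by
      refine integral_congr_ae ?_
      filter_upwards [hwz, ae_restrict_mem measurableSet_Ioc] with y h1 h2
      rw [h1, hM z y h2.1 h2.2 hz.2]
    rw [hcong, ← integral_of_le hz.1.le]
    exact bridge A g hg z hz.1.le
  have hMK : ∀ x y : ℝ, 0 < y → y ≤ x → x ≤ 1 → K x y = k0.G x y := hk0G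
  have hML : ∀ x y : ℝ, 0 < y → y ≤ x → x ≤ 1 → resK k0 x y = (resGood k0).G x y :=
    fun _ _ _ _ _ => rfl
  constructor
  · -- Part 1: boundedness
    refine ⟨((n : ℝ) * k0.C) ^ 2, sq_nonneg _, ?_⟩
    intro w hw
    obtain ⟨g, hwg, hg, hf2⟩ := hprep w hw
    set Iw := ∫ y in Set.Ioc (0:ℝ) 1, ‖g y‖ with hIw
    have hIw0 : 0 ≤ Iw := integral_nonneg fun y => norm_nonneg _
    have hInner : ∀ z ∈ Set.Ioc (0:ℝ) 1,
        (∫ y in (0:ℝ)..z, (K z y).mulVec (w y)) = appv k0.G g z :=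
      hGen k0 K hMK w g hwg hg
    have hC0 := k0.C0
    have int1 : IntegrableOn (fun x => ‖appv k0.G g x‖ ^ 2) (Set.Ioc 0 1) volume := by
      refine Integrable.mono' (g := fun _ => (((n:ℝ) * k0.C) * Iw) ^ 2)
        (integrableOn_const (by simp [Real.volume_Ioc]))
        (((meas_appv k0 g hg).norm.pow_const 2).aestronglyMeasurable)
        (Filter.Eventually.of_forall fun x => ?_)
      rw [Real.norm_eq_abs, abs_of_nonneg (by positivity)]
      exact pow_le_pow_left₀ (norm_nonneg _) (norm_appv_le k0 g hg x) 2
    have hgsq : (∫ x in Set.Ioc (0:ℝ) 1, ‖g x‖ ^ 2) = ∫ x in (0:ℝ)..1, ‖w x‖ ^ 2 := by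
      rw [integral_of_le zero_le_one]
      refine (MeasureTheory.integral_congr_ae ?_).symm
      have hwg' : ∀ᵐ x ∂volume.restrict (Set.Ioc (0:ℝ) 1), w x = g x := by rwa [hres2] at hwg
      filter_upwards [hwg'] with x hx
      rw [hx]
    have hvar : Iw ^ 2 ≤ ∫ x in Set.Ioc (0:ℝ) 1, ‖g x‖ ^ 2 := by
      have h0 := ProbabilityTheory.variance_nonneg (fun x => ‖g x‖) μ
      rw [ProbabilityTheory.variance_eq_sub hf2] at h0
      simp only [Pi.pow_apply] at h0
      have e1 : Iw = ∫ x, ‖g x‖ ∂μ := by rw [hIw, hres2]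
      have e2 : (∫ x in Set.Ioc (0:ℝ) 1, ‖g x‖ ^ 2) = ∫ x, ‖g x‖ ^ 2 ∂μ := by
        rw [hres2]
      rw [e1, e2]
      linarith
    calc (∫ x in (0:ℝ)..1, ‖∫ y in (0:ℝ)..x, (K x y).mulVec (w y)‖ ^ 2)
        = ∫ x in Set.Ioc (0:ℝ) 1, ‖appv k0.G g x‖ ^ 2 := by
          rw [integral_of_le zero_le_one]
          refine setIntegral_congr_fun measurableSet_Ioc (fun x hx => ?_)
          rw [hInner x hx]
      _ ≤ ∫ _x in Set.Ioc (0:ℝ) 1, (((n:ℝ) * k0.C) * Iw) ^ 2 := by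
          refine setIntegral_mono_on int1
            (integrableOn_const (by simp [Real.volume_Ioc]))
            measurableSet_Ioc (fun x _ => ?_)
          exact pow_le_pow_left₀ (norm_nonneg _) (norm_appv_le k0 g hg x) 2
      _ = (((n:ℝ) * k0.C) * Iw) ^ 2 := by
          rw [setIntegral_const]
          simp [Real.volume_Ioc]
      _ = ((n:ℝ) * k0.C) ^ 2 * Iw ^ 2 := by ring
      _ ≤ ((n:ℝ) * k0.C) ^ 2 * ∫ x in Set.Ioc (0:ℝ) 1, ‖g x‖ ^ 2 :=
          mul_le_mul_of_nonneg_left hvar (sq_nonneg _)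
      _ = ((n:ℝ) * k0.C) ^ 2 * ∫ x in (0:ℝ)..1, ‖w x‖ ^ 2 := by rw [hgsq]
  · -- Part 2: invertibility
    refine ⟨resK k0, fun i j => (resGood k0).meas i j,
      ⟨(resGood k0).C, fun x y _ _ _ i j => (resGood k0).bd x y i j⟩, ?_⟩
    intro w hw
    obtain ⟨g, hwg, hg, _⟩ := hprep w hw
    have hwg' : ∀ᵐ x ∂volume.restrict (Set.Ioc (0:ℝ) 1), w x = g x := by rwa [hres2] at hwg
    have hInner : ∀ z ∈ Set.Ioc (0:ℝ) 1,
        (∫ y in (0:ℝ)..z, (K z y).mulVec (w y)) = appv k0.G g z :=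
      hGen k0 K hMK w g hwg hg
    have hInnerL : ∀ z ∈ Set.Ioc (0:ℝ) 1,
        (∫ y in (0:ℝ)..z, (resK k0 z y).mulVec (w y)) = appv (resK k0) g z :=
      hGen (resGood k0) (resK k0) hML w g hwg hg
    have hV1 : Nice (fun z => g z - appv k0.G g z) := nice_sub _ _ hg (nice_appv k0 g hg)
    have hV2 : Nice (fun z => g z - appv (resK k0) g z) :=
      nice_sub _ _ hg (nice_appv (resGood k0) g hg)
    constructor
    · filter_upwards [hwg, ae_restrict_mem measurableSet_Ioo] with x hx_eq hx_mem
      have hx1 : x ∈ Set.Ioc (0:ℝ) 1 := ⟨hx_mem.1, hx_mem.2.le⟩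
      have hwx : ∀ᵐ y ∂volume.restrict (Set.Ioc (0:ℝ) x), w y = g y :=
        ae_restrict_of_ae_restrict_of_subset (Set.Ioc_subset_Ioc_right hx1.2) hwg'
      have e2 : (∫ y in (0:ℝ)..x, (resK k0 x y).mulVec
          ((fun z => w z - ∫ y' in (0:ℝ)..z, (K z y').mulVec (w y')) y)) =
          appv (resK k0) (fun z => g z - appv k0.G g z) x := by
        rw [integral_of_le hx1.1.le]
        have hcong : (∫ y in Set.Ioc (0:ℝ) x, (resK k0 x y).mulVec
            ((fun z => w z - ∫ y' in (0:ℝ)..z, (K z y').mulVec (w y')) y)) =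
            ∫ y in Set.Ioc (0:ℝ) x,
              ((resGood k0).G x y).mulVec ((fun z => g z - appv k0.G g z) y) := by
          refine MeasureTheory.integral_congr_ae ?_
          filter_upwards [hwx, ae_restrict_mem measurableSet_Ioc] with y h1 h2
          have harg : w y - (∫ y' in (0:ℝ)..y, (K y y').mulVec (w y')) =
              g y - appv k0.G g y := by
            rw [h1, hInner y ⟨h2.1, h2.2.trans hx1.2⟩]
          rw [harg]
          rfl
        rw [hcong, ← integral_of_le hx1.1.le]
        exact bridge (resGood k0) _ hV1 x hx1.1.le
      show (w x - ∫ y in (0:ℝ)..x, (K x y).mulVec (w y)) - _ = w x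
      rw [e2, hx_eq, hInner x hx1]
      exact lemA k0 g hg x hx1
    · filter_upwards [hwg, ae_restrict_mem measurableSet_Ioo] with x hx_eq hx_mem
      have hx1 : x ∈ Set.Ioc (0:ℝ) 1 := ⟨hx_mem.1, hx_mem.2.le⟩
      have hwx : ∀ᵐ y ∂volume.restrict (Set.Ioc (0:ℝ) x), w y = g y :=
        ae_restrict_of_ae_restrict_of_subset (Set.Ioc_subset_Ioc_right hx1.2) hwg'
      have e2 : (∫ y in (0:ℝ)..x, (K x y).mulVec
          ((fun z => w z - ∫ y' in (0:ℝ)..z, (resK k0 z y').mulVec (w y')) y)) =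
          appv k0.G (fun z => g z - appv (resK k0) g z) x := by
        rw [integral_of_le hx1.1.le]
        have hcong : (∫ y in Set.Ioc (0:ℝ) x, (K x y).mulVec
            ((fun z => w z - ∫ y' in (0:ℝ)..z, (resK k0 z y').mulVec (w y')) y)) =
            ∫ y in Set.Ioc (0:ℝ) x,
              (k0.G x y).mulVec ((fun z => g z - appv (resK k0) g z) y) := by
          refine MeasureTheory.integral_congr_ae ?_
          filter_upwards [hwx, ae_restrict_mem measurableSet_Ioc] with y h1 h2
          have harg : w y - (∫ y' in (0:ℝ)..y, (resK k0 y y').mulVec (w y')) =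
              g y - appv (resK k0) g y := by
            rw [h1, hInnerL y ⟨h2.1, h2.2.trans hx1.2⟩]
          rw [harg, hMK x y h2.1 h2.2 hx1.2]
        rw [hcong, ← integral_of_le hx1.1.le]
        exact bridge k0 _ hV2 x hx1.1.le
      show (w x - ∫ y in (0:ℝ)..x, (resK k0 x y).mulVec (w y)) - _ = w x
      rw [e2, hx_eq, hInnerL x hx1]
      exact lemB k0 g hg x hx1
end
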